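/- arXiv:1010.1156 — 9 statements merged into one kernel-verified Lean document; each statement's English description precedes it below -/
import Mathlib

section
/- If D is a minimal element of cofInv(f), then for every x ∈ D one has int(Germ(x)) = D; in particular x ∈ int(Germ(x)). -/
open Set Topology Function

variable {X : Type*}

/-- `A` is mod-f-invariant: `g(A \ S) ⊆ A`. -/
def ModInv (g : X → X) (S A : Set X) : Prop := g '' (A \ S) ⊆ A

/-- `A` is fully mod-f-invariant: both `A` and its complement are mod-f-invariant. -/
def FullInv (g : X → X) (S A : Set X) : Prop := ModInv g S A ∧ ModInv g S Aᶜ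

/-- The least fully mod-f-invariant set containing `A`. -/
def fullHull (g : X → X) (S A : Set X) : Set X := ⋂₀ {B | FullInv g S B ∧ A ⊆ B}

/-- The least mod-f-invariant set containing `A`. -/
def modHull (g : X → X) (S A : Set X) : Set X := ⋂₀ {B | ModInv g S B ∧ A ⊆ B}

/-- `R(A)`: points whose orbit reaches `A` before hitting `S`. -/
def Reach (g : X → X) (S A : Set X) : Set X :=
  {x | ∃ n : ℕ, (∀ k < n, g^[k] x ∉ S) ∧ g^[n] x ∈ A}

variable [TopologicalSpace X]

/-- A set is regular open if it equals the interior of its closure. -/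
def RegOpen (O : Set X) : Prop := O = interior (closure O)

/-- `cofInv f`: the nonempty regular open fully mod-f-invariant sets. -/
def CofInv (g : X → X) (S : Set X) : Set (Set X) :=
  {D | D.Nonempty ∧ RegOpen D ∧ FullInv g S D}

/-- A minimal element of `cofInv f`. -/
def MinCofInv (g : X → X) (S : Set X) (D : Set X) : Prop :=
  D ∈ CofInv g S ∧ ∀ E ∈ CofInv g S, E ⊆ D → E = D

/-- `coInv f`: the nonempty regular open mod-f-invariant sets. -/
def CoInv (g : X → X) (S : Set X) : Set (Set X) :=
  {U | U.Nonempty ∧ RegOpen U ∧ ModInv g S U}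

/-- A transitive element of `coInv f`. -/
def TransElem (g : X → X) (S : Set X) (U : Set X) : Prop :=
  U ∈ CoInv g S ∧ ∀ V ∈ CoInv g S, V ⊆ U → V = U

/-- A transitive cascade: a decreasing sequence of elements of `coInv f` that is
eventually inside every element of `coInv f` meeting its first term. -/
def IsCascade (g : X → X) (S : Set X) (γ : ℕ → Set X) : Prop :=
  Antitone γ ∧ (∀ n, γ n ∈ CoInv g S) ∧
    ∀ V ∈ CoInv g S, (V ∩ γ 0).Nonempty → ∃ m, γ m ⊆ V

/-- The core of a cascade. -/
def Core (γ : ℕ → Set X) : Set X := ⋂ n, closure (γ n)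

/-- The domain of a cascade. -/
def Domain (g : X → X) (S : Set X) (γ : ℕ → Set X) : Set X :=
  interior (closure (⋃₀ {U | U ∈ CoInv g S ∧ γ 0 ⊆ U ∧
    ∀ V ∈ CoInv g S, (V ∩ U).Nonempty → ∃ m, γ m ⊆ V}))

/-- `Germ x`: the intersection of the closures of the elements of `cofInv f` containing `x`. -/
def Germ (g : X → X) (S : Set X) (x : X) : Set X :=
  ⋂ D ∈ {D | D ∈ CofInv g S ∧ x ∈ D}, closure D

/-- `M(f)`: the union of all minimal elements of `cofInv f`. -/
def MinUnion (g : X → X) (S : Set X) : Set X := ⋃₀ {D | MinCofInv g S D}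

/-- `N(f) = X \ cl(M(f))`. -/
def NonMin (g : X → X) (S : Set X) : Set X := (closure (MinUnion g S))ᶜ


lemma icic {X : Type*} [TopologicalSpace X] (A : Set X) :
    interior (closure (interior (closure A))) = interior (closure A) := by
  apply subset_antisymm
  · exact interior_mono (closure_minimal interior_subset isClosed_closure)
  · exact isOpen_interior.subset_interior_closure

lemma fullInv_ic {X : Type*} [TopologicalSpace X] {g : X → X} {S A : Set X}
    (hreg1 : ∀ O : Set X, IsOpen O → IsOpen (g ⁻¹' O \ S))
    (hreg2 : ∀ O : Set X, IsOpen O → IsOpen (g '' (O \ S)))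
    (hAo : IsOpen A) (hA : FullInv g S A) : FullInv g S (interior (closure A)) := by
  set B := interior (closure A) with hB
  constructor
  · -- g '' (B \ S) ⊆ B
    have hsub : g '' (B \ S) ⊆ closure A := by
      rintro y ⟨x, ⟨hxB, hxS⟩, rfl⟩
      rw [mem_closure_iff]
      intro O hO hyO
      have hx : x ∈ g ⁻¹' O \ S := ⟨hyO, hxS⟩
      have hxcl : x ∈ closure A := interior_subset hxB
      rw [mem_closure_iff] at hxcl
      obtain ⟨z, ⟨hzO, hzS⟩, hzA⟩ := hxcl _ (hreg1 O hO) hx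
      exact ⟨g z, hzO, hA.1 ⟨z, ⟨hzA, hzS⟩, rfl⟩⟩
    intro y hy
    have hopen := hreg2 B isOpen_interior
    exact interior_maximal hsub hopen hy
  · -- g '' (Bᶜ \ S) ⊆ Bᶜ
    rintro y ⟨x, ⟨hxB, hxS⟩, rfl⟩
    by_contra hgx
    simp only [Set.mem_compl_iff, not_not] at hgx
    -- Bᶜ = closure ((closure A)ᶜ)
    have hBc : (B : Set X)ᶜ = closure ((closure A)ᶜ) := by
      rw [hB, ← closure_compl]
    have hx' : x ∈ closure ((closure A)ᶜ) := hBc ▸ hxB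
    rw [mem_closure_iff] at hx'
    obtain ⟨z, ⟨hz1, hz2⟩, hz3⟩ := hx' _ (hreg1 B isOpen_interior) ⟨hgx, hxS⟩
    -- z ∉ closure A, z ∉ S, g z ∈ B
    have hgzB : g z ∈ B := hz1
    have hgzcl : g z ∈ closure A := interior_subset hgzB
    rw [mem_closure_iff] at hgzcl
    have hW : IsOpen (g '' ((closure A)ᶜ \ S)) := hreg2 _ isClosed_closure.isOpen_compl
    obtain ⟨a, haW, haA⟩ := hgzcl _ hW ⟨z, ⟨hz3, hz2⟩, rfl⟩
    obtain ⟨w, ⟨hw1, hw2⟩, rfl⟩ := haW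
    have : g w ∈ Aᶜ := hA.2 ⟨w, ⟨fun h => hw1 (subset_closure h), hw2⟩, rfl⟩
    exact this haA

lemma key_sub {X : Type*} [TopologicalSpace X] {g : X → X} {S D E : Set X}
    (hreg1 : ∀ O : Set X, IsOpen O → IsOpen (g ⁻¹' O \ S))
    (hreg2 : ∀ O : Set X, IsOpen O → IsOpen (g '' (O \ S)))
    (hD : MinCofInv g S D) (hE : E ∈ CofInv g S) {x : X} (hxD : x ∈ D) (hxE : x ∈ E) :
    D ⊆ closure E := by
  obtain ⟨⟨hDne, hDro, hDfi⟩, hmin⟩ := hD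
  obtain ⟨hEne, hEro, hEfi⟩ := hE
  have hDo : IsOpen D := hDro ▸ isOpen_interior
  have hEo : IsOpen E := hEro ▸ isOpen_interior
  set A := E ∩ D with hA
  have hAo : IsOpen A := hEo.inter hDo
  have hAfi : FullInv g S A := by
    constructor
    · rintro y ⟨z, ⟨⟨hzE, hzD⟩, hzS⟩, rfl⟩
      exact ⟨hEfi.1 ⟨z, ⟨hzE, hzS⟩, rfl⟩, hDfi.1 ⟨z, ⟨hzD, hzS⟩, rfl⟩⟩
    · rintro y ⟨z, ⟨hz, hzS⟩, rfl⟩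
      rw [Set.mem_compl_iff, hA, Set.mem_inter_iff, not_and_or] at hz ⊢
      rcases hz with h | h
      · exact Or.inl (hEfi.2 ⟨z, ⟨h, hzS⟩, rfl⟩)
      · exact Or.inr (hDfi.2 ⟨z, ⟨h, hzS⟩, rfl⟩)
  set F := interior (closure A) with hF
  have hFc : F ∈ CofInv g S := by
    refine ⟨⟨x, hAo.subset_interior_closure ⟨hxE, hxD⟩⟩, ?_, fullInv_ic hreg1 hreg2 hAo hAfi⟩
    exact (icic A).symm
  have hFD : F ⊆ D := by
    calc F ⊆ interior (closure D) := interior_mono (closure_mono Set.inter_subset_right)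
    _ = D := hDro.symm
  have := hmin F hFc hFD
  calc D = F := this.symm
  _ ⊆ closure A := interior_subset
  _ ⊆ closure E := closure_mono Set.inter_subset_left

theorem stmt4 {X : Type*} [MetricSpace X] [CompleteSpace X]
    [TopologicalSpace.SeparableSpace X] [∀ x : X, (𝓝[≠] x).NeBot]
    (g : X → X) (S : Set X) (hScl : IsClosed S) (hSnd : IsNowhereDense S)
    (hreg1 : ∀ O : Set X, IsOpen O → IsOpen (g ⁻¹' O \ S))
    (hreg2 : ∀ O : Set X, IsOpen O → IsOpen (g '' (O \ S))) (D : Set X) (hD : MinCofInv g S D) :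
    ∀ x ∈ D, interior (Germ g S x) = D ∧ x ∈ interior (Germ g S x) := by
  intro x hxD
  have hmain : interior (Germ g S x) = D := by
    apply subset_antisymm
    · have : Germ g S x ⊆ closure D := by
        apply Set.biInter_subset_of_mem
        exact ⟨hD.1, hxD⟩
      calc interior (Germ g S x) ⊆ interior (closure D) := interior_mono this
      _ = D := hD.1.2.1.symm
    · have hDo : IsOpen D := hD.1.2.1 ▸ isOpen_interior
      apply interior_maximal _ hDo
      intro y hyD
      simp only [Germ, Set.mem_iInter]
      rintro E ⟨hE, hxE⟩
      exact key_sub hreg1 hreg2 hD hE hxD hxE hyD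
  exact ⟨hmain, hmain ▸ hxD⟩
end

section
/- There exists a meagre set Z ⊆ X such that Germ(x) is nowhere dense (equivalently int(Germ(x)) = ∅, since Germ(x) is closed) for every x ∈ N(f) \ Z. -/
open Set Topology Function

variable {X : Type*}

variable [TopologicalSpace X]

/-! ### Auxiliary machinery for `stmt5` -/

/-- The inductive mod-`f` grand-orbit hull of a set `B`. -/
inductive MHull (g : X → X) (S B : Set X) : X → Prop
  | base {x : X} : x ∈ B → MHull g S B x
  | fwd {x : X} : MHull g S B x → x ∉ S → MHull g S B (g x)
  | bwd {x : X} : MHull g S B (g x) → x ∉ S → MHull g S B x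

/-- The hull as a set. -/
def MHullSet (g : X → X) (S B : Set X) : Set X := {x | MHull g S B x}

lemma subset_mhullSet (g : X → X) (S B : Set X) : B ⊆ MHullSet g S B :=
  fun _ hx => MHull.base hx

lemma fullInv_mhullSet (g : X → X) (S B : Set X) : FullInv g S (MHullSet g S B) := by
  constructor
  · rintro y ⟨z, ⟨hz, hzS⟩, rfl⟩
    exact hz.fwd hzS
  · rintro y ⟨z, ⟨hz, hzS⟩, rfl⟩
    exact fun h => hz (MHull.bwd h hzS)

lemma mhullSet_least {g : X → X} {S B E : Set X} (hE : FullInv g S E) (hBE : B ⊆ E) :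
    MHullSet g S B ⊆ E := by
  intro x hx
  induction hx with
  | base h => exact hBE h
  | fwd _ hS ih => exact hE.1 ⟨_, ⟨ih, hS⟩, rfl⟩
  | bwd _ hS ih =>
      by_contra hxE
      exact hE.2 ⟨_, ⟨hxE, hS⟩, rfl⟩ ih

lemma mhullSet_mono {g : X → X} {S B B' : Set X} (h : B ⊆ B') :
    MHullSet g S B ⊆ MHullSet g S B' := by
  intro x hx
  induction hx with
  | base hb => exact MHull.base (h hb)
  | fwd _ hS ih => exact MHull.fwd ih hS
  | bwd _ hS ih => exact MHull.bwd ih hS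

lemma hull_extract {g : X → X} {S V E : Set X} (hE : FullInv g S E) :
    ∀ z, MHull g S V z → z ∈ E → (V ∩ E).Nonempty := by
  intro z hz
  induction hz with
  | base h => exact fun hzE => ⟨_, h, hzE⟩
  | fwd _ hS ih =>
      intro hgE
      apply ih
      by_contra hyE
      exact hE.2 ⟨_, ⟨hyE, hS⟩, rfl⟩ hgE
  | bwd _ hS ih =>
      intro hzE
      exact ih (hE.1 ⟨_, ⟨hzE, hS⟩, rfl⟩)

lemma isOpen_mhullSet {g : X → X} {S B : Set X}
    (hreg1 : ∀ O : Set X, IsOpen O → IsOpen (g ⁻¹' O \ S))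
    (hreg2 : ∀ O : Set X, IsOpen O → IsOpen (g '' (O \ S)))
    (hB : IsOpen B) : IsOpen (MHullSet g S B) := by
  have key : ∀ x, MHull g S B x → ∃ U : Set X, IsOpen U ∧ x ∈ U ∧ U ⊆ MHullSet g S B := by
    intro x hx
    induction hx with
    | base h => exact ⟨B, hB, h, subset_mhullSet g S B⟩
    | fwd _ hS ih =>
        obtain ⟨U, hUo, hxU, hUH⟩ := ih
        refine ⟨g '' (U \ S), hreg2 U hUo, ⟨_, ⟨hxU, hS⟩, rfl⟩, ?_⟩
        rintro y ⟨z, ⟨hz, hzS⟩, rfl⟩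
        exact MHull.fwd (hUH hz) hzS
    | bwd _ hS ih =>
        obtain ⟨U, hUo, hxU, hUH⟩ := ih
        refine ⟨g ⁻¹' U \ S, hreg1 U hUo, ⟨hxU, hS⟩, ?_⟩
        rintro y ⟨hy, hyS⟩
        exact MHull.bwd (hUH hy) hyS
  rw [isOpen_iff_forall_mem_open]
  intro x hx
  obtain ⟨U, hUo, hxU, hUH⟩ := key x hx
  exact ⟨U, hUH, hUo, hxU⟩

lemma continuousAt_off_S {g : X → X} {S : Set X} (hScl : IsClosed S)
    (hreg1 : ∀ O : Set X, IsOpen O → IsOpen (g ⁻¹' O \ S)) {y : X} (hy : y ∉ S) :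
    ContinuousAt g y := by
  have hco : ContinuousOn g Sᶜ := by
    rw [continuousOn_open_iff hScl.isOpen_compl]
    intro t ht
    have h := hreg1 t ht
    rwa [diff_eq, inter_comm] at h
  exact hco.continuousAt (hScl.isOpen_compl.mem_nhds hy)

lemma closure_diff_S {S O : Set X} (hSint : interior S = ∅) (hO : IsOpen O) :
    closure (O \ S) = closure O := by
  refine Subset.antisymm (closure_mono diff_subset) ?_
  intro x hx
  rw [mem_closure_iff] at hx ⊢
  intro U hU hxU
  obtain ⟨y, hy⟩ := hx U hU hxU
  have hne : (U ∩ O).Nonempty := ⟨y, hy⟩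
  have hnsub : ¬ (U ∩ O ⊆ S) := by
    intro hsub
    have h2 : U ∩ O ⊆ interior S := (hU.inter hO).subset_interior_iff.mpr hsub
    rw [hSint] at h2
    exact hne.ne_empty (subset_empty_iff.mp h2)
  obtain ⟨z, hzUO, hzS⟩ := not_subset.mp hnsub
  exact ⟨z, hzUO.1, hzUO.2, hzS⟩

lemma cl_invariant {g : X → X} {S U : Set X} (hScl : IsClosed S) (hSint : interior S = ∅)
    (hreg1 : ∀ O : Set X, IsOpen O → IsOpen (g ⁻¹' O \ S))
    (hU : IsOpen U) (hinv : g '' (U \ S) ⊆ U) :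
    g '' (closure U \ S) ⊆ closure U := by
  rintro y ⟨z, ⟨hz, hzS⟩, rfl⟩
  have h1 : z ∈ closure (U \ S) := by
    rw [closure_diff_S hSint hU]; exact hz
  have h2 : g z ∈ closure (g '' (U \ S)) :=
    ((continuousAt_off_S hScl hreg1 hzS).continuousWithinAt).mem_closure_image h1
  exact closure_mono hinv h2

lemma regOpen_int_cl {U : Set X} (hU : IsOpen U) : RegOpen (interior (closure U)) := by
  have h1 : closure (interior (closure U)) = closure U :=
    Subset.antisymm (closure_minimal interior_subset isClosed_closure)
      (closure_mono (interior_maximal subset_closure hU))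
  unfold RegOpen
  rw [h1]

lemma fullInv_regularize {g : X → X} {S H : Set X} (hScl : IsClosed S)
    (hSint : interior S = ∅)
    (hreg1 : ∀ O : Set X, IsOpen O → IsOpen (g ⁻¹' O \ S))
    (hreg2 : ∀ O : Set X, IsOpen O → IsOpen (g '' (O \ S)))
    (hH : IsOpen H) (hfi : FullInv g S H) :
    FullInv g S (interior (closure H)) := by
  constructor
  · -- forward invariance of the regularization
    have h1 : g '' (interior (closure H) \ S) ⊆ closure H := by
      have hcl := cl_invariant hScl hSint hreg1 hH hfi.1
      rintro y ⟨z, ⟨hz, hzS⟩, rfl⟩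
      exact hcl ⟨z, ⟨interior_subset hz, hzS⟩, rfl⟩
    exact interior_maximal h1 (hreg2 _ isOpen_interior)
  · -- invariance of the complement
    have hTc : (interior (closure H))ᶜ = closure (interior Hᶜ) := by
      rw [interior_compl, closure_compl]
    have hstepA : g '' (interior Hᶜ \ S) ⊆ interior Hᶜ := by
      have himg : g '' (interior Hᶜ \ S) ⊆ Hᶜ := by
        rintro y ⟨z, ⟨hz, hzS⟩, rfl⟩
        exact hfi.2 ⟨z, ⟨interior_subset hz, hzS⟩, rfl⟩
      exact interior_maximal himg (hreg2 _ isOpen_interior)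
    show g '' ((interior (closure H))ᶜ \ S) ⊆ (interior (closure H))ᶜ
    rw [hTc]
    exact cl_invariant hScl hSint hreg1 isOpen_interior hstepA

lemma ext_cofInv {g : X → X} {S E : Set X} (hScl : IsClosed S) (hSint : interior S = ∅)
    (hreg1 : ∀ O : Set X, IsOpen O → IsOpen (g ⁻¹' O \ S))
    (hreg2 : ∀ O : Set X, IsOpen O → IsOpen (g '' (O \ S)))
    (hE : E ∈ CofInv g S) (hne : (interior Eᶜ).Nonempty) :
    interior Eᶜ ∈ CofInv g S := by
  obtain ⟨hEne, hEreg, hEfi⟩ := hE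
  have hEopen : IsOpen E := hEreg ▸ isOpen_interior
  refine ⟨hne, ?_, ?_, ?_⟩
  · -- regular open
    have h1 : closure (interior Eᶜ) ⊆ Eᶜ :=
      closure_minimal interior_subset hEopen.isClosed_compl
    exact Subset.antisymm (interior_maximal subset_closure isOpen_interior)
      (interior_mono h1)
  · -- forward invariance
    have himg : g '' (interior Eᶜ \ S) ⊆ Eᶜ := by
      rintro y ⟨z, ⟨hz, hzS⟩, rfl⟩
      exact hEfi.2 ⟨z, ⟨interior_subset hz, hzS⟩, rfl⟩
    exact interior_maximal himg (hreg2 _ isOpen_interior)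
  · -- complement invariance
    have hTc : (interior Eᶜ)ᶜ = closure E := by
      rw [interior_compl, compl_compl]
    show g '' ((interior Eᶜ)ᶜ \ S) ⊆ (interior Eᶜ)ᶜ
    rw [hTc]
    exact cl_invariant hScl hSint hreg1 hEopen hEfi.1

lemma int_germ_subset {g : X → X} {S : Set X} {x : X} {E : Set X}
    (hE : E ∈ CofInv g S) (hx : x ∈ E) : interior (Germ g S x) ⊆ E := by
  have h1 : Germ g S x ⊆ closure E := biInter_subset_of_mem (show E ∈ {D | D ∈ CofInv g S ∧ x ∈ D} from ⟨hE, hx⟩)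
  have h2 := interior_mono h1
  rwa [← hE.2.1] at h2


theorem stmt5 {X : Type*} [MetricSpace X] [CompleteSpace X]
    [TopologicalSpace.SeparableSpace X] [∀ x : X, (𝓝[≠] x).NeBot]
    (g : X → X) (S : Set X) (hScl : IsClosed S) (hSnd : IsNowhereDense S)
    (hreg1 : ∀ O : Set X, IsOpen O → IsOpen (g ⁻¹' O \ S))
    (hreg2 : ∀ O : Set X, IsOpen O → IsOpen (g '' (O \ S))) :
    ∃ Z : Set X, IsMeagre Z ∧
      ∀ x ∈ NonMin g S \ Z, interior (Germ g S x) = ∅ := by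
  haveI : SecondCountableTopology X :=
    UniformSpace.secondCountable_of_separable X
  have hSint : interior S = ∅ := by
    have h := hSnd
    rwa [IsNowhereDense, hScl.closure_eq] at h
  -- the canonical regular open fully invariant set generated by an open set
  set DD : Set X → Set X := fun B => interior (closure (MHullSet g S B)) with hDDdef
  have hDDopen : ∀ B : Set X, IsOpen (DD B) := fun B => isOpen_interior
  have hsubDD : ∀ B : Set X, IsOpen B → B ⊆ DD B := fun B hB =>
    (subset_mhullSet g S B).trans
      (interior_maximal subset_closure (isOpen_mhullSet hreg1 hreg2 hB))
  have hDDcof : ∀ B : Set X, IsOpen B → B.Nonempty → DD B ∈ CofInv g S := by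
    intro B hB hBne
    have hH : IsOpen (MHullSet g S B) := isOpen_mhullSet hreg1 hreg2 hB
    exact ⟨hBne.mono (hsubDD B hB), regOpen_int_cl hH,
      fullInv_regularize hScl hSint hreg1 hreg2 hH (fullInv_mhullSet g S B)⟩
  have hDDsub : ∀ B E : Set X, E ∈ CofInv g S → B ⊆ E → DD B ⊆ E := by
    intro B E hE hBE
    have h1 : MHullSet g S B ⊆ E := mhullSet_least hE.2.2 hBE
    have h2 : DD B ⊆ interior (closure E) := interior_mono (closure_mono h1)
    rwa [← hE.2.1] at h2
  have hDDmono : ∀ B B' : Set X, B ⊆ B' → DD B ⊆ DD B' := fun B B' h =>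
    interior_mono (closure_mono (mhullSet_mono h))
  set 𝓑 := TopologicalSpace.countableBasis X with h𝓑def
  refine ⟨⋃ b ∈ 𝓑, frontier (DD b), ?_, ?_⟩
  · -- the union of the frontiers is meagre
    rw [isMeagre_iff_countable_union_isNowhereDense]
    refine ⟨(fun b => frontier (DD b)) '' 𝓑, ?_, (TopologicalSpace.countable_countableBasis X).image _, ?_⟩
    · rintro t ⟨b, _, rfl⟩
      refine isClosed_frontier.isNowhereDense_iff.mpr ?_
      rw [← frontier_compl]
      exact interior_frontier (hDDopen b).isClosed_compl
    · rw [sUnion_image]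
  · -- main argument
    rintro x ⟨hxN, hxZ⟩
    by_contra hne
    obtain ⟨v, hv⟩ : (interior (Germ g S x)).Nonempty := nonempty_iff_ne_empty.mpr hne
    set V := interior (Germ g S x) with hVdef
    have hVopen : IsOpen V := isOpen_interior
    have hxfr : ∀ b ∈ 𝓑, x ∉ frontier (DD b) := fun b hb h => hxZ (mem_biUnion hb h)
    -- dichotomy: for a basic set inside V, x must be in its canonical hull
    have hdich : ∀ b ∈ 𝓑, b.Nonempty → b ⊆ V → x ∈ DD b := by
      intro b hb hbne hbV
      have hbo : IsOpen b := TopologicalSpace.isOpen_of_mem_countableBasis hb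
      by_cases hx1 : x ∈ DD b
      · exact hx1
      exfalso
      have hx2 : x ∉ closure (DD b) := by
        intro h
        exact hxfr b hb ⟨h, by rwa [(hDDopen b).interior_eq]⟩
      have hxT : x ∈ interior (DD b)ᶜ := by
        rw [interior_compl]
        exact hx2
      have hT : interior (DD b)ᶜ ∈ CofInv g S :=
        ext_cofInv hScl hSint hreg1 hreg2 (hDDcof b hbo hbne) ⟨x, hxT⟩
      have hVT : V ⊆ interior (DD b)ᶜ := int_germ_subset hT hxT
      obtain ⟨p, hp⟩ := hbne
      exact interior_subset (hVT (hbV hp)) (hsubDD b hbo hp)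
    -- the canonical set generated by V is minimal
    have hD0 : DD V ∈ CofInv g S := hDDcof V hVopen ⟨v, hv⟩
    have hmin : MinCofInv g S (DD V) := by
      refine ⟨hD0, ?_⟩
      intro E hE hEsub
      have hEopen : IsOpen E := hE.2.1 ▸ isOpen_interior
      obtain ⟨z, hzE⟩ := hE.1
      have hz2 : z ∈ closure (MHullSet g S V) := interior_subset (hEsub hzE)
      rw [mem_closure_iff] at hz2
      obtain ⟨w', hw'E, hw'H⟩ := hz2 E hEopen hzE
      have hVE : (V ∩ E).Nonempty := hull_extract hE.2.2 w' hw'H hw'E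
      obtain ⟨w, hwV, hwE⟩ := hVE
      obtain ⟨b, hb𝓑, hwb, hbsub⟩ :=
        (TopologicalSpace.isBasis_countableBasis X).exists_subset_of_mem_open
          (show w ∈ V ∩ E from ⟨hwV, hwE⟩) (hVopen.inter hEopen)
      have hbV : b ⊆ V := hbsub.trans inter_subset_left
      have hbE : b ⊆ E := hbsub.trans inter_subset_right
      have hxb : x ∈ DD b := hdich b hb𝓑 ⟨w, hwb⟩ hbV
      have hDbcof : DD b ∈ CofInv g S :=
        hDDcof b (TopologicalSpace.isOpen_of_mem_countableBasis hb𝓑) ⟨w, hwb⟩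
      have hVDb : V ⊆ DD b := int_germ_subset hDbcof hxb
      have hVE' : V ⊆ E := hVDb.trans (hDDsub b E hE hbE)
      exact Subset.antisymm hEsub (hDDsub V E hE hVE')
    -- conclude: x lies in a minimal element, contradicting x ∈ N(f)
    obtain ⟨b₀, hb₀𝓑, hvb₀, hb₀V⟩ :=
      (TopologicalSpace.isBasis_countableBasis X).exists_subset_of_mem_open hv hVopen
    have hxb₀ : x ∈ DD b₀ := hdich b₀ hb₀𝓑 ⟨v, hvb₀⟩ hb₀V
    have hxD0 : x ∈ DD V := hDDmono b₀ V hb₀V hxb₀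
    have hxM : x ∈ MinUnion g S := ⟨DD V, hmin, hxD0⟩
    exact hxN (subset_closure hxM)
end

section
/- M(f) ⊆ int({ x ∈ X : int(Germ(x)) ≠ ∅ }) ⊆ int(cl(M(f))). -/
open Set Topology Function

variable {X : Type*}

variable [TopologicalSpace X]

namespace Stmt6Aux

section Plain
variable (g : X → X) (S : Set X)

/-- iterative open fully invariant hull -/
def hullSeq (B : Set X) : ℕ → Set X
  | 0 => B
  | n + 1 => (hullSeq B n ∪ g '' (hullSeq B n \ S)) ∪ (g ⁻¹' (hullSeq B n) \ S)

def hull (B : Set X) : Set X := ⋃ n, hullSeq g S B n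

end Plain

variable {g : X → X} {S : Set X}

lemma modInv_inter {A B : Set X} (hA : ModInv g S A) (hB : ModInv g S B) :
    ModInv g S (A ∩ B) := by
  rintro _ ⟨x, ⟨⟨hxA, hxB⟩, hxS⟩, rfl⟩
  exact ⟨hA ⟨x, ⟨hxA, hxS⟩, rfl⟩, hB ⟨x, ⟨hxB, hxS⟩, rfl⟩⟩

lemma modInv_union {A B : Set X} (hA : ModInv g S A) (hB : ModInv g S B) :
    ModInv g S (A ∪ B) := by
  rintro _ ⟨x, ⟨hx, hxS⟩, rfl⟩
  rcases hx with hx | hx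
  · exact Or.inl (hA ⟨x, ⟨hx, hxS⟩, rfl⟩)
  · exact Or.inr (hB ⟨x, ⟨hx, hxS⟩, rfl⟩)

lemma fullInv_inter {A B : Set X} (hA : FullInv g S A) (hB : FullInv g S B) :
    FullInv g S (A ∩ B) := by
  refine ⟨modInv_inter hA.1 hB.1, ?_⟩
  rw [Set.compl_inter]
  exact modInv_union hA.2 hB.2

lemma fullInv_union {A B : Set X} (hA : FullInv g S A) (hB : FullInv g S B) :
    FullInv g S (A ∪ B) := by
  refine ⟨modInv_union hA.1 hB.1, ?_⟩
  rw [Set.compl_union]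
  exact modInv_inter hA.2 hB.2

variable (hreg1 : ∀ O : Set X, IsOpen O → IsOpen (g ⁻¹' O \ S))
variable (hreg2 : ∀ O : Set X, IsOpen O → IsOpen (g '' (O \ S)))

include hreg2 in
lemma modInv_interior {A : Set X} (hA : ModInv g S A) : ModInv g S (interior A) := by
  have h1 : g '' (interior A \ S) ⊆ A :=
    (Set.image_mono (Set.diff_subset_diff_left interior_subset)).trans hA
  have h2 : IsOpen (g '' (interior A \ S)) := hreg2 _ isOpen_interior
  intro y hy
  exact interior_maximal h1 h2 hy

include hreg1 in
lemma modInv_closure {A : Set X} (hA : ModInv g S A) : ModInv g S (closure A) := by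
  rintro _ ⟨x, ⟨hxc, hxS⟩, rfl⟩
  rw [mem_closure_iff]
  intro o ho hgo
  have hU : IsOpen (g ⁻¹' o \ S) := hreg1 o ho
  have hxU : x ∈ g ⁻¹' o \ S := ⟨hgo, hxS⟩
  obtain ⟨a, haU, haA⟩ := mem_closure_iff.1 hxc _ hU hxU
  exact ⟨g a, haU.1, hA ⟨a, ⟨haA, haU.2⟩, rfl⟩⟩

include hreg1 hreg2 in
lemma fullInv_interior_closure {A : Set X} (hA : FullInv g S A) :
    FullInv g S (interior (closure A)) := by
  refine ⟨modInv_interior hreg2 (modInv_closure hreg1 hA.1), ?_⟩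
  have h : closure (interior Aᶜ) = (interior (closure A))ᶜ := by
    rw [interior_compl, closure_compl]
  rw [← h]
  exact modInv_closure hreg1 (modInv_interior hreg2 hA.2)

lemma regOpen_interior_closure_of_open {A : Set X} (hA : IsOpen A) :
    RegOpen (interior (closure A)) := by
  have h : closure (interior (closure A)) = closure A := by
    apply Subset.antisymm
    · exact (closure_mono interior_subset).trans (by rw [closure_closure])
    · exact closure_mono (interior_maximal subset_closure hA)
  unfold RegOpen
  rw [h]

lemma regOpen_interior_of_closed {C : Set X} (hC : IsClosed C) :
    RegOpen (interior C) := by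
  apply Subset.antisymm
  · exact interior_maximal subset_closure isOpen_interior
  · exact interior_mono (closure_minimal interior_subset hC)

lemma regOpen_isOpen {O : Set X} (h : RegOpen O) : IsOpen O := h ▸ isOpen_interior

lemma regOpen_inter {A B : Set X} (hA : RegOpen A) (hB : RegOpen B) :
    RegOpen (A ∩ B) := by
  apply Subset.antisymm
  · exact interior_maximal subset_closure ((regOpen_isOpen hA).inter (regOpen_isOpen hB))
  · intro x hx
    constructor
    · have : x ∈ interior (closure A) :=
        interior_mono (closure_mono inter_subset_left) hx
      rwa [← hA] at this
    · have : x ∈ interior (closure B) :=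
        interior_mono (closure_mono inter_subset_right) hx
      rwa [← hB] at this

lemma cofInv_inter {D E : Set X} (hD : D ∈ CofInv g S) (hE : E ∈ CofInv g S)
    (hne : (D ∩ E).Nonempty) : D ∩ E ∈ CofInv g S :=
  ⟨hne, regOpen_inter hD.2.1 hE.2.1, fullInv_inter hD.2.2 hE.2.2⟩

include hreg1 hreg2 in
lemma cofInv_interior_closure {A : Set X} (hAo : IsOpen A) (hAf : FullInv g S A)
    (hne : A.Nonempty) : interior (closure A) ∈ CofInv g S := by
  refine ⟨hne.mono (interior_maximal subset_closure hAo),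
    regOpen_interior_closure_of_open hAo, fullInv_interior_closure hreg1 hreg2 hAf⟩

include hreg1 hreg2 in
lemma cofInv_compl_closure {E : Set X} (hE : E ∈ CofInv g S)
    (hne : (closure E)ᶜ.Nonempty) : (closure E)ᶜ ∈ CofInv g S := by
  refine ⟨hne, ?_, ?_, ?_⟩
  · rw [← interior_compl]
    exact regOpen_interior_of_closed (regOpen_isOpen hE.2.1).isClosed_compl
  · rw [← interior_compl]
    exact modInv_interior hreg2 hE.2.2.2
  · rw [compl_compl]
    exact modInv_closure hreg1 hE.2.2.1


-- Germ lemmas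
lemma germ_closed {x : X} : IsClosed (Germ g S x) :=
  isClosed_biInter (fun _ _ => isClosed_closure)

include hreg1 in
lemma modInv_germ {x : X} : ModInv g S (Germ g S x) := by
  rintro _ ⟨w, ⟨hw, hwS⟩, rfl⟩
  simp only [Germ, mem_iInter] at hw ⊢
  intro D hD
  exact modInv_closure hreg1 hD.1.2.2.1 ⟨w, ⟨hw D hD, hwS⟩, rfl⟩

include hreg1 hreg2 in
lemma modInv_germ_compl {x : X} : ModInv g S (Germ g S x)ᶜ := by
  rintro _ ⟨w, ⟨hw, hwS⟩, rfl⟩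
  simp only [mem_compl_iff, Germ, mem_iInter, not_forall] at hw ⊢
  obtain ⟨D, hD, hwD⟩ := hw
  refine ⟨D, hD, ?_⟩
  have h1 : ModInv g S (closure D)ᶜ := by
    rw [← interior_compl]
    exact modInv_interior hreg2 hD.1.2.2.2
  exact h1 ⟨w, ⟨hwD, hwS⟩, rfl⟩

include hreg1 hreg2 in
lemma fullInv_W {x : X} : FullInv g S (interior (Germ g S x)) := by
  have h := fullInv_interior_closure hreg1 hreg2
    (A := Germ g S x) ⟨modInv_germ hreg1, modInv_germ_compl hreg1 hreg2⟩
  rwa [germ_closed.closure_eq] at h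

lemma regOpen_W {x : X} : RegOpen (interior (Germ g S x)) :=
  regOpen_interior_of_closed germ_closed

include hreg1 hreg2 in
lemma cofInv_W {x : X} (hne : (interior (Germ g S x)).Nonempty) :
    interior (Germ g S x) ∈ CofInv g S :=
  ⟨hne, regOpen_W, fullInv_W hreg1 hreg2⟩

lemma W_subset {x : X} {D : Set X} (hD : D ∈ CofInv g S) (hx : x ∈ D) :
    interior (Germ g S x) ⊆ D := by
  have h1 : Germ g S x ⊆ closure D := biInter_subset_of_mem (x := D) ⟨hD, hx⟩
  have h2 : interior (Germ g S x) ⊆ interior (closure D) := interior_mono h1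
  rwa [← hD.2.1] at h2

include hreg1 hreg2 in
lemma mem_closure_W {x : X} (hne : (interior (Germ g S x)).Nonempty) :
    x ∈ closure (interior (Germ g S x)) := by
  by_contra h
  have hD : (closure (interior (Germ g S x)))ᶜ ∈ CofInv g S :=
    cofInv_compl_closure hreg1 hreg2 (cofInv_W hreg1 hreg2 hne) ⟨x, h⟩
  have hsub := W_subset hD h
  obtain ⟨w, hw⟩ := hne
  exact hsub hw (subset_closure hw)

-- the boundary dichotomy
include hreg1 hreg2 in
lemma germ_boundary {z : X} {Y : Set X} (hY : Y ∈ CofInv g S) :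
    interior (Germ g S z) ⊆ closure Y ∨
      z ∈ closure (interior (Germ g S z) \ closure Y) := by
  by_cases hz : z ∈ closure (interior (Germ g S z) \ closure Y)
  · exact Or.inr hz
  left
  set W := interior (Germ g S z) with hWdef
  set T := closure Y ∪ Wᶜ with hTdef
  have hTc : IsClosed T := isClosed_closure.union isOpen_interior.isClosed_compl
  have hzD : z ∈ interior T := by
    have h1 : (W \ closure Y)ᶜ = T := by
      rw [diff_eq, compl_inter, compl_compl, union_comm]
    have h2 : z ∈ interior ((W \ closure Y)ᶜ) := by
      rw [interior_compl]; exact hz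
    rwa [h1] at h2
  have hDmem : interior T ∈ CofInv g S := by
    refine ⟨?_, regOpen_interior_of_closed hTc, ?_, ?_⟩
    · obtain ⟨y0, hy0⟩ := hY.1
      exact ⟨y0, interior_maximal (subset_closure.trans subset_union_left)
        (regOpen_isOpen hY.2.1) hy0⟩
    · exact modInv_interior hreg2
        (modInv_union (modInv_closure hreg1 hY.2.2.1) (fullInv_W hreg1 hreg2).2)
    · have hTc' : ModInv g S Tᶜ := by
        rw [hTdef, compl_union, compl_compl, ← interior_compl]
        exact modInv_inter (modInv_interior hreg2 hY.2.2.2) (fullInv_W hreg1 hreg2).1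
      have h3 := modInv_closure hreg1 hTc'
      rwa [closure_compl] at h3
  have hGsub : Germ g S z ⊆ closure (interior T) :=
    biInter_subset_of_mem (x := interior T) ⟨hDmem, hzD⟩
  intro w hw
  have hwT : w ∈ T := closure_minimal interior_subset hTc (hGsub (interior_subset hw))
  rcases hwT with hw' | hw'
  · exact hw'
  · exact absurd hw hw'


-- hull lemmas
lemma subset_hull {B : Set X} : B ⊆ hull g S B :=
  fun x hx => mem_iUnion.2 ⟨0, hx⟩

include hreg1 hreg2 in
lemma isOpen_hull {B : Set X} (hB : IsOpen B) : IsOpen (hull g S B) := by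
  apply isOpen_iUnion
  intro n
  induction n with
  | zero => exact hB
  | succ n ih => exact (ih.union (hreg2 _ ih)).union (hreg1 _ ih)

lemma fullInv_hull {B : Set X} : FullInv g S (hull g S B) := by
  constructor
  · rintro _ ⟨x, ⟨hx, hxS⟩, rfl⟩
    obtain ⟨n, hn⟩ := mem_iUnion.1 hx
    exact mem_iUnion.2 ⟨n + 1, Or.inl (Or.inr ⟨x, ⟨hn, hxS⟩, rfl⟩)⟩
  · rintro _ ⟨x, ⟨hx, hxS⟩, rfl⟩
    intro hgx
    obtain ⟨n, hn⟩ := mem_iUnion.1 hgx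
    exact hx (mem_iUnion.2 ⟨n + 1, Or.inr ⟨hn, hxS⟩⟩)

lemma hull_subset {B F : Set X} (hF : FullInv g S F) (hBF : B ⊆ F) :
    hull g S B ⊆ F := by
  apply iUnion_subset
  intro n
  induction n with
  | zero => exact hBF
  | succ n ih =>
    rintro x (⟨hx | hx⟩ | hx)
    · exact ih hx
    · obtain ⟨w, ⟨hw, hwS⟩, rfl⟩ := hx
      exact hF.1 ⟨w, ⟨ih hw, hwS⟩, rfl⟩
    · by_contra hxF
      exact (hF.2 ⟨x, ⟨hxF, hx.2⟩, rfl⟩) (ih hx.1)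

end Stmt6Aux

namespace Stmt6Aux
section Metric
variable {Y : Type*} [MetricSpace Y] [CompleteSpace Y] [TopologicalSpace.SeparableSpace Y]
variable {g : Y → Y} {S : Set Y}
variable (hreg1 : ∀ O : Set Y, IsOpen O → IsOpen (g ⁻¹' O \ S))
variable (hreg2 : ∀ O : Set Y, IsOpen O → IsOpen (g '' (O \ S)))

include hreg1 hreg2 in
lemma exists_min {V : Set Y} (hVo : IsOpen V) (hVne : V.Nonempty)
    (hVA : ∀ y ∈ V, (interior (Germ g S y)).Nonempty) :
    ∃ z, z ∈ V ∧ MinCofInv g S (interior (Germ g S z)) := by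
  haveI : SecondCountableTopology Y := UniformSpace.secondCountable_of_separable Y
  obtain ⟨b, hbc, hbne', hbb⟩ := TopologicalSpace.exists_countable_basis Y
  have hbnonempty : b.Nonempty := by
    obtain ⟨y0, hy0⟩ := hVne
    obtain ⟨v, hvb, _, _⟩ := hbb.exists_subset_of_mem_open (mem_univ y0) isOpen_univ
    exact ⟨v, hvb⟩
  obtain ⟨f, hf⟩ := hbc.exists_eq_range hbnonempty
  have hstep : ∀ (n : ℕ) (z : Y) (r : ℝ), z ∈ V → 0 < r → Metric.closedBall z r ⊆ V →
      ∃ (z' : Y) (r' : ℝ), z' ∈ V ∧ 0 < r' ∧ Metric.closedBall z' r' ⊆ V ∧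
        r' ≤ r / 2 ∧
        Metric.closedBall z' r' ⊆ Metric.ball z r ∩ interior (Germ g S z) ∧
        (¬ f n ⊆ interior (Germ g S z') ∨
          ∀ w ∈ Metric.ball z r ∩ interior (Germ g S z), f n ⊆ interior (Germ g S w)) := by
    intro n z r hzV hr hball
    have hWz : (interior (Germ g S z)).Nonempty := hVA z hzV
    have hO : IsOpen (Metric.ball z r ∩ interior (Germ g S z)) :=
      Metric.isOpen_ball.inter isOpen_interior
    have hOne : (Metric.ball z r ∩ interior (Germ g S z)).Nonempty :=
      mem_closure_iff.1 (mem_closure_W hreg1 hreg2 hWz) _ Metric.isOpen_ball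
        (Metric.mem_ball_self hr)
    obtain ⟨z', hz'O, hdisj⟩ : ∃ z' ∈ Metric.ball z r ∩ interior (Germ g S z),
        (¬ f n ⊆ interior (Germ g S z') ∨
          ∀ w ∈ Metric.ball z r ∩ interior (Germ g S z), f n ⊆ interior (Germ g S w)) := by
      by_cases hA : ∃ w ∈ Metric.ball z r ∩ interior (Germ g S z),
          ¬ f n ⊆ interior (Germ g S w)
      · obtain ⟨w, hw, hw2⟩ := hA
        exact ⟨w, hw, Or.inl hw2⟩
      · push_neg at hA
        exact ⟨hOne.choose, hOne.choose_spec, Or.inr hA⟩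
    obtain ⟨r'', hr''pos, hr''⟩ :=
      (Metric.nhds_basis_closedBall.mem_iff).1 (hO.mem_nhds hz'O)
    refine ⟨z', min r'' (r / 2), ?_, lt_min hr''pos (by linarith), ?_,
      min_le_right _ _, ?_, hdisj⟩
    · exact hball (Metric.ball_subset_closedBall hz'O.1)
    · exact fun x hx => hball (Metric.ball_subset_closedBall
        ((hr'' (Metric.closedBall_subset_closedBall (min_le_left _ _) hx)).1))
    · exact (Metric.closedBall_subset_closedBall (min_le_left _ _)).trans hr''
  obtain ⟨y0, hy0⟩ := hVne
  obtain ⟨r0, hr0pos, hr0⟩ := (Metric.nhds_basis_closedBall.mem_iff).1 (hVo.mem_nhds hy0)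
  have hstep' : ∀ (n : ℕ)
      (p : {p : Y × ℝ // p.1 ∈ V ∧ 0 < p.2 ∧ Metric.closedBall p.1 p.2 ⊆ V}),
      ∃ q : {q : Y × ℝ // q.1 ∈ V ∧ 0 < q.2 ∧ Metric.closedBall q.1 q.2 ⊆ V},
        q.1.2 ≤ p.1.2 / 2 ∧
        Metric.closedBall q.1.1 q.1.2 ⊆
          Metric.ball p.1.1 p.1.2 ∩ interior (Germ g S p.1.1) ∧
        (¬ f n ⊆ interior (Germ g S q.1.1) ∨
          ∀ w ∈ Metric.ball p.1.1 p.1.2 ∩ interior (Germ g S p.1.1),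
            f n ⊆ interior (Germ g S w)) := by
    rintro n ⟨⟨z, r⟩, hz, hr, hb⟩
    obtain ⟨z', r', h1, h2, h3, h4, h5, h6⟩ := hstep n z r hz hr hb
    exact ⟨⟨(z', r'), h1, h2, h3⟩, h4, h5, h6⟩
  choose stepF hstepF using hstep'
  obtain ⟨F, hFs⟩ : ∃ F : ℕ →
      {p : Y × ℝ // p.1 ∈ V ∧ 0 < p.2 ∧ Metric.closedBall p.1 p.2 ⊆ V},
      ∀ n, F (n + 1) = stepF n (F n) :=
    ⟨fun n => Nat.rec ⟨(y0, r0), hy0, hr0pos, hr0⟩ (fun n ih => stepF n ih) n,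
      fun n => rfl⟩
  have hrel : ∀ n, (F (n + 1)).1.2 ≤ (F n).1.2 / 2 ∧
      Metric.closedBall (F (n + 1)).1.1 (F (n + 1)).1.2 ⊆
        Metric.ball (F n).1.1 (F n).1.2 ∩ interior (Germ g S (F n).1.1) ∧
      (¬ f n ⊆ interior (Germ g S (F (n + 1)).1.1) ∨
        ∀ w ∈ Metric.ball (F n).1.1 (F n).1.2 ∩ interior (Germ g S (F n).1.1),
          f n ⊆ interior (Germ g S w)) := by
    intro n
    rw [hFs n]
    exact hstepF n (F n)
  have hInv : ∀ n, (F n).1.1 ∈ V ∧ 0 < (F n).1.2 ∧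
      Metric.closedBall (F n).1.1 (F n).1.2 ⊆ V := fun n => (F n).2
  have hchain : ∀ n, Metric.closedBall (F (n + 1)).1.1 (F (n + 1)).1.2 ⊆
      Metric.closedBall (F n).1.1 (F n).1.2 :=
    fun n => ((hrel n).2.1).trans (inter_subset_left.trans Metric.ball_subset_closedBall)
  have hmono : ∀ m n, m ≤ n → Metric.closedBall (F n).1.1 (F n).1.2 ⊆
      Metric.closedBall (F m).1.1 (F m).1.2 := by
    intro m n hmn
    induction hmn with
    | refl => exact subset_rfl
    | step h ih => exact (hchain _).trans ih
  have hgeo : ∀ n, (F n).1.2 ≤ (F 0).1.2 * (1 / 2) ^ n := by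
    intro n
    induction n with
    | zero => simp
    | succ n ih =>
      have h1 := (hrel n).1
      calc (F (n + 1)).1.2 ≤ (F n).1.2 / 2 := h1
        _ ≤ ((F 0).1.2 * (1 / 2) ^ n) / 2 := by linarith
        _ = (F 0).1.2 * (1 / 2) ^ (n + 1) := by ring
  have hdist : ∀ n, dist (F n).1.1 (F (n + 1)).1.1 ≤ (F 0).1.2 * (1 / 2) ^ n := by
    intro n
    have h1 : (F (n + 1)).1.1 ∈ Metric.ball (F n).1.1 (F n).1.2 :=
      ((hrel n).2.1 (Metric.mem_closedBall_self (hInv (n + 1)).2.1.le)).1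
    rw [dist_comm]
    exact (le_of_lt (Metric.mem_ball.1 h1)).trans (hgeo n)
  have hcauchy : CauchySeq (fun n => (F n).1.1) :=
    cauchySeq_of_le_geometric (1 / 2) ((F 0).1.2) (by norm_num) hdist
  obtain ⟨zst, hzst⟩ := cauchySeq_tendsto_of_complete hcauchy
  have hzCB : ∀ n, zst ∈ Metric.closedBall (F n).1.1 (F n).1.2 := by
    intro n
    refine Metric.isClosed_closedBall.mem_of_tendsto hzst ?_
    refine Filter.eventually_atTop.2 ⟨n, fun m hm => ?_⟩
    exact hmono n m hm (Metric.mem_closedBall_self (hInv m).2.1.le)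
  have hzO : ∀ n, zst ∈ Metric.ball (F n).1.1 (F n).1.2 ∩
      interior (Germ g S (F n).1.1) := fun n => (hrel n).2.1 (hzCB (n + 1))
  have hzV : zst ∈ V := (hInv 0).2.2 (hzCB 0)
  refine ⟨zst, hzV, cofInv_W hreg1 hreg2 (hVA _ hzV), ?_⟩
  intro E hE hEsub
  obtain ⟨x0, hx0⟩ := hE.1
  obtain ⟨v, hvb, hxv, hvE⟩ := hbb.exists_subset_of_mem_open hx0 (regOpen_isOpen hE.2.1)
  have hvr : v ∈ range f := hf ▸ hvb
  obtain ⟨n, hn⟩ := hvr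
  have hfnE : f n ⊆ E := by rw [hn]; exact hvE
  have hfne : (f n).Nonempty := ⟨x0, by rw [hn]; exact hxv⟩
  have hfopen : IsOpen (f n) := by rw [hn]; exact hbb.isOpen hvb
  rcases (hrel n).2.2 with hA | hB
  · exfalso
    have hz1 : zst ∈ interior (Germ g S (F (n + 1)).1.1) := (hzO (n + 1)).2
    have hsub2 : interior (Germ g S zst) ⊆ interior (Germ g S (F (n + 1)).1.1) :=
      W_subset (cofInv_W hreg1 hreg2 ⟨zst, hz1⟩) hz1
    exact hA (hfnE.trans (hEsub.trans hsub2))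
  · have hHopen : IsOpen (hull g S (f n)) := isOpen_hull hreg1 hreg2 hfopen
    have hHE : hull g S (f n) ⊆ E := hull_subset hE.2.2 hfnE
    have hEh : interior (closure (hull g S (f n))) ∈ CofInv g S :=
      cofInv_interior_closure hreg1 hreg2 hHopen fullInv_hull (hfne.mono subset_hull)
    have hEhE : interior (closure (hull g S (f n))) ⊆ E := by
      have h1 := interior_mono (closure_mono hHE)
      rwa [← hE.2.1] at h1
    have hfnEh : f n ⊆ interior (closure (hull g S (f n))) :=
      subset_hull.trans (interior_maximal subset_closure hHopen)
    rcases germ_boundary hreg1 hreg2 (z := zst) hEh with hsub | hzcl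
    · have hWE : interior (Germ g S zst) ⊆ E := by
        have h1 : interior (Germ g S zst) ⊆ closure E := hsub.trans (closure_mono hEhE)
        have h2 := interior_maximal h1 isOpen_interior
        rwa [← hE.2.1] at h2
      exact Subset.antisymm hEsub hWE
    · exfalso
      have hOopen : IsOpen (Metric.ball (F n).1.1 (F n).1.2 ∩
          interior (Germ g S (F n).1.1)) := Metric.isOpen_ball.inter isOpen_interior
      obtain ⟨z'', hz''O, hz''2⟩ := mem_closure_iff.1 hzcl _ hOopen (hzO n)
      have hD : (closure (interior (closure (hull g S (f n)))))ᶜ ∈ CofInv g S :=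
        cofInv_compl_closure hreg1 hreg2 hEh ⟨z'', hz''2.2⟩
      have hsub3 : interior (Germ g S z'') ⊆
          (closure (interior (closure (hull g S (f n)))))ᶜ := W_subset hD hz''2.2
      obtain ⟨w, hw⟩ := hfne
      exact hsub3 (hB z'' hz''O hw) (subset_closure (hfnEh hw))

end Metric
end Stmt6Aux


theorem stmt6 {X : Type*} [MetricSpace X] [CompleteSpace X]
    [TopologicalSpace.SeparableSpace X] [∀ x : X, (𝓝[≠] x).NeBot]
    (g : X → X) (S : Set X) (hScl : IsClosed S) (hSnd : IsNowhereDense S)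
    (hreg1 : ∀ O : Set X, IsOpen O → IsOpen (g ⁻¹' O \ S))
    (hreg2 : ∀ O : Set X, IsOpen O → IsOpen (g '' (O \ S))) :
    MinUnion g S ⊆ interior {x : X | (interior (Germ g S x)).Nonempty} ∧
      interior {x : X | (interior (Germ g S x)).Nonempty} ⊆
        interior (closure (MinUnion g S)) := by
  constructor
  · intro x hx
    rw [MinUnion, mem_sUnion] at hx
    obtain ⟨D, hD, hxD⟩ := hx
    have hDopen : IsOpen D := Stmt6Aux.regOpen_isOpen hD.1.2.1
    have hDA : D ⊆ {x : X | (interior (Germ g S x)).Nonempty} := by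
      intro z hz
      have hDG : D ⊆ interior (Germ g S z) := by
        apply interior_maximal ?_ hDopen
        intro w hw
        simp only [Germ, mem_iInter]
        intro E hE
        have hinter : D ∩ E ∈ CofInv g S :=
          Stmt6Aux.cofInv_inter hD.1 hE.1 ⟨z, hz, hE.2⟩
        have heq : D ∩ E = D := hD.2 _ hinter inter_subset_left
        have hDE : D ⊆ E := fun u hu => by
          have h2 : u ∈ D ∩ E := by rw [heq]; exact hu
          exact h2.2
        exact subset_closure (hDE hw)
      exact ⟨z, hDG hz⟩
    exact interior_maximal hDA hDopen hxD
  · apply interior_maximal ?_ isOpen_interior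
    intro y hy
    rw [mem_closure_iff]
    intro o ho hyo
    have hVo : IsOpen (o ∩ interior {x : X | (interior (Germ g S x)).Nonempty}) :=
      ho.inter isOpen_interior
    have hVne : (o ∩ interior {x : X | (interior (Germ g S x)).Nonempty}).Nonempty :=
      ⟨y, hyo, hy⟩
    have hVA : ∀ w ∈ o ∩ interior {x : X | (interior (Germ g S x)).Nonempty},
        (interior (Germ g S w)).Nonempty := fun w hw =>
      interior_subset (s := {x : X | (interior (Germ g S x)).Nonempty}) hw.2
    obtain ⟨z, hzV, hmin⟩ := Stmt6Aux.exists_min hreg1 hreg2 hVo hVne hVA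
    have hzcl : z ∈ closure (interior (Germ g S z)) :=
      Stmt6Aux.mem_closure_W hreg1 hreg2 (hVA z hzV)
    obtain ⟨w, hwo, hwW⟩ := mem_closure_iff.1 hzcl o ho hzV.1
    exact ⟨w, hwo, mem_sUnion.2 ⟨interior (Germ g S z), hmin, hwW⟩⟩
end

section
/- If A and B are mod-f-invariant subsets of X, then the following are equivalent: [A] ∩ [B] ≠ ∅; A ∩ B ≠ ∅; A ∩ [B] ≠ ∅. -/
open Set Topology Function

variable {X : Type*}

variable [TopologicalSpace X]

lemma push_ModInv {g : X → X} {S A : Set X} (hA : ModInv g S A) :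
    ∀ m (x : X), x ∈ A → (∀ k < m, g^[k] x ∉ S) → g^[m] x ∈ A := by
  intro m
  induction m with
  | zero => intro x hx _; simpa using hx
  | succ m ih =>
    intro x hx hk
    rw [Function.iterate_succ_apply']
    exact hA ⟨g^[m] x, ⟨ih x hx (fun k hkm => hk k (Nat.lt_succ_of_lt hkm)),
      hk m (Nat.lt_succ_self m)⟩, rfl⟩

lemma reach_push {g : X → X} {S A : Set X} (hA : ModInv g S A) {x : X} {n m : ℕ}
    (hnm : n ≤ m) (hnS : ∀ k < m, g^[k] x ∉ S) (hxA : g^[n] x ∈ A) :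
    g^[m] x ∈ A := by
  have : g^[m] x = g^[m - n] (g^[n] x) := by
    rw [← Function.iterate_add_apply, Nat.sub_add_cancel hnm]
  rw [this]
  refine push_ModInv hA (m - n) _ hxA fun k hk => ?_
  rw [← Function.iterate_add_apply]
  exact hnS (k + n) (by omega)

lemma fullInv_reach {g : X → X} {S A : Set X} (hA : ModInv g S A) :
    FullInv g S (Reach g S A) := by
  constructor
  · rintro y ⟨x, ⟨⟨n, hnS, hnA⟩, hxS⟩, rfl⟩
    cases n with
    | zero => exact ⟨0, by simp, hA ⟨x, ⟨by simpa using hnA, hxS⟩, rfl⟩⟩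
    | succ n =>
      exact ⟨n, fun k hk => by
        rw [← Function.iterate_succ_apply]
        exact hnS (k+1) (by omega), by rwa [← Function.iterate_succ_apply]⟩
  · rintro y ⟨x, ⟨hx, hxS⟩, rfl⟩ ⟨n, hnS, hnA⟩
    refine hx ⟨n + 1, fun k hk => ?_, ?_⟩
    · cases k with
      | zero => simpa using hxS
      | succ k => rw [Function.iterate_succ_apply]; exact hnS k (by omega)
    · rwa [Function.iterate_succ_apply]

lemma fullHull_subset_reach {g : X → X} {S A : Set X} (hA : ModInv g S A) :
    fullHull g S A ⊆ Reach g S A :=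
  sInter_subset_of_mem ⟨fullInv_reach hA, fun x hx => ⟨0, by simp, by simpa using hx⟩⟩

lemma subset_fullHull {g : X → X} {S A : Set X} : A ⊆ fullHull g S A :=
  subset_sInter fun _ hB => hB.2

theorem stmt10 {X : Type*} [MetricSpace X] [CompleteSpace X]
    [TopologicalSpace.SeparableSpace X] [∀ x : X, (𝓝[≠] x).NeBot]
    (g : X → X) (S : Set X) (hScl : IsClosed S) (hSnd : IsNowhereDense S)
    (hreg1 : ∀ O : Set X, IsOpen O → IsOpen (g ⁻¹' O \ S))
    (hreg2 : ∀ O : Set X, IsOpen O → IsOpen (g '' (O \ S))) (A B : Set X)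
    (hA : ModInv g S A) (hB : ModInv g S B) :
    ((fullHull g S A ∩ fullHull g S B).Nonempty ↔ (A ∩ B).Nonempty) ∧
    ((A ∩ B).Nonempty ↔ (A ∩ fullHull g S B).Nonempty) := by
  have key : ∀ {x : X} {n m : ℕ}, (∀ k < n, g^[k] x ∉ S) → g^[n] x ∈ A →
      (∀ k < m, g^[k] x ∉ S) → g^[m] x ∈ B → (A ∩ B).Nonempty := by
    intro x n m hnS hnA hmS hmB
    rcases le_total n m with h | h
    · exact ⟨g^[m] x, reach_push hA h hmS hnA, hmB⟩
    · exact ⟨g^[n] x, hnA, reach_push hB h hnS hmB⟩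
  constructor
  · constructor
    · rintro ⟨x, hxA, hxB⟩
      obtain ⟨n, hnS, hnA⟩ := fullHull_subset_reach hA hxA
      obtain ⟨m, hmS, hmB⟩ := fullHull_subset_reach hB hxB
      exact key hnS hnA hmS hmB
    · rintro ⟨x, hxA, hxB⟩
      exact ⟨x, subset_fullHull hxA, subset_fullHull hxB⟩
  · constructor
    · rintro ⟨x, hxA, hxB⟩
      exact ⟨x, hxA, subset_fullHull hxB⟩
    · rintro ⟨x, hxA, hxB⟩
      obtain ⟨m, hmS, hmB⟩ := fullHull_subset_reach hB hxB
      exact key (n := 0) (by simp) (by simpa using hxA) hmS hmB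
end

section
/- If γ = (U_n)_{n≥1} is a transitive cascade with int(C_γ) ≠ ∅, then there exists m ≥ 1 such that U_m is transitive and int(C_γ) = U_m. In particular, for every transitive cascade γ the set int(C_γ) is either empty or a transitive element of coInv(f). -/
open Set Topology Function

variable {X : Type*}

variable [TopologicalSpace X]

theorem stmt11 {X : Type*} [MetricSpace X] [CompleteSpace X]
    [TopologicalSpace.SeparableSpace X] [∀ x : X, (𝓝[≠] x).NeBot]
    (g : X → X) (S : Set X) (hScl : IsClosed S) (hSnd : IsNowhereDense S)
    (hreg1 : ∀ O : Set X, IsOpen O → IsOpen (g ⁻¹' O \ S))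
    (hreg2 : ∀ O : Set X, IsOpen O → IsOpen (g '' (O \ S))) (γ : ℕ → Set X) (hγ : IsCascade g S γ)
    (hC : (interior (Core γ)).Nonempty) :
    ∃ m : ℕ, TransElem g S (γ m) ∧ interior (Core γ) = γ m := by
  obtain ⟨hmono, hmem, hcas⟩ := hγ
  set W := interior (Core γ) with hWdef
  have hWsub : ∀ n, W ⊆ γ n := by
    intro n
    have h1 : W ⊆ interior (closure (γ n)) :=
      interior_mono (fun x hx => mem_iInter.mp hx n)
    rwa [← (hmem n).2.1] at h1
  have hclinv : ∀ n, ModInv g S (closure (γ n)) := by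
    intro n
    rintro y ⟨x, ⟨hxc, hxS⟩, rfl⟩
    rw [mem_closure_iff] at hxc ⊢
    intro O hO hgO
    obtain ⟨z, hz1, hz2⟩ := hxc _ (hreg1 O hO) ⟨hgO, hxS⟩
    exact ⟨g z, hz1.1, (hmem n).2.2 ⟨z, ⟨hz2, hz1.2⟩, rfl⟩⟩
  have hCoreinv : ModInv g S (Core γ) := by
    rintro y ⟨x, ⟨hxc, hxS⟩, rfl⟩
    rw [Core, mem_iInter] at hxc ⊢
    intro n
    exact hclinv n ⟨x, ⟨hxc n, hxS⟩, rfl⟩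
  have hCoreCl : IsClosed (Core γ) := isClosed_iInter (fun n => isClosed_closure)
  have hWinv : ModInv g S W := by
    have hopen : IsOpen (g '' (W \ S)) := hreg2 W isOpen_interior
    have hsub : g '' (W \ S) ⊆ Core γ := by
      rintro y ⟨x, ⟨hx, hxS⟩, rfl⟩
      exact hCoreinv ⟨x, ⟨interior_subset hx, hxS⟩, rfl⟩
    exact hopen.subset_interior_iff.mpr hsub
  have hWreg : RegOpen W := by
    apply Subset.antisymm
    · exact isOpen_interior.subset_interior_iff.mpr subset_closure
    · exact interior_mono (closure_minimal interior_subset hCoreCl)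
  have hWCo : W ∈ CoInv g S := ⟨hC, hWreg, hWinv⟩
  obtain ⟨x, hx⟩ := hC
  obtain ⟨m, hm⟩ := hcas W hWCo ⟨x, hx, hWsub 0 hx⟩
  have hWm : W = γ m := Subset.antisymm (hWsub m) hm
  refine ⟨m, ⟨hmem m, ?_⟩, hWm⟩
  intro V hV hVm
  obtain ⟨y, hy⟩ := hV.1
  have hy0 : y ∈ γ 0 := hmono (Nat.zero_le m) (hVm hy)
  obtain ⟨k, hk⟩ := hcas V hV ⟨y, hy, hy0⟩
  have hmV : γ m ⊆ V := hWm ▸ (hWsub k).trans hk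
  exact Subset.antisymm hVm hmV
end

section
/- The domain D_γ of every transitive cascade γ is a minimal element of cofInv(f). Conversely, every minimal element of cofInv(f) equals D_γ for some transitive cascade γ. -/
set_option linter.unusedSectionVars false
set_option linter.unusedVariables false


open Set Topology Function

variable {X : Type*}

variable [TopologicalSpace X]

section AuxInv

variable {X : Type*} [TopologicalSpace X] {g : X → X} {S : Set X}

lemma regOpen_isOpen {O : Set X} (h : RegOpen O) : IsOpen O := by
  rw [h]; exact isOpen_interior

lemma regOpen_intCl {A : Set X} (hA : IsOpen A) : RegOpen (interior (closure A)) := by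
  have h1 : closure (interior (closure A)) = closure A :=
    Subset.antisymm (closure_minimal interior_subset isClosed_closure)
      (closure_mono (interior_maximal subset_closure hA))
  unfold RegOpen
  rw [h1]

lemma open_subset_intCl {A : Set X} (hA : IsOpen A) : A ⊆ interior (closure A) :=
  interior_maximal subset_closure hA

lemma intCl_mono {A B : Set X} (h : A ⊆ B) :
    interior (closure A) ⊆ interior (closure B) :=
  interior_mono (closure_mono h)

lemma intCl_subset_of_regOpen {A V : Set X} (h : A ⊆ V) (hV : RegOpen V) :
    interior (closure A) ⊆ V := by
  conv_rhs => rw [hV]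
  exact intCl_mono h

lemma open_inter_nonempty_of_closure {V A : Set X} (hV : IsOpen V)
    (h : (V ∩ closure A).Nonempty) : (V ∩ A).Nonempty := by
  obtain ⟨x, hxV, hxA⟩ := h
  exact mem_closure_iff.mp hxA V hV hxV

lemma nonempty_diff_of_open {O : Set X} (hS : interior S = ∅) (hO : IsOpen O)
    (h : O.Nonempty) : (O \ S).Nonempty := by
  rw [Set.diff_nonempty]
  intro hc
  obtain ⟨x, hx⟩ := h
  have : x ∈ interior S := interior_maximal hc hO hx
  rw [hS] at this
  exact this

lemma modInv_union {A B : Set X} (hA : ModInv g S A) (hB : ModInv g S B) :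
    ModInv g S (A ∪ B) := by
  rintro _ ⟨x, ⟨hx | hx, hxS⟩, rfl⟩
  · exact Or.inl (hA ⟨x, ⟨hx, hxS⟩, rfl⟩)
  · exact Or.inr (hB ⟨x, ⟨hx, hxS⟩, rfl⟩)

lemma modInv_inter {A B : Set X} (hA : ModInv g S A) (hB : ModInv g S B) :
    ModInv g S (A ∩ B) := by
  rintro _ ⟨x, ⟨⟨h1, h2⟩, hxS⟩, rfl⟩
  exact ⟨hA ⟨x, ⟨h1, hxS⟩, rfl⟩, hB ⟨x, ⟨h2, hxS⟩, rfl⟩⟩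

lemma modInv_sUnion {𝒜 : Set (Set X)} (h : ∀ A ∈ 𝒜, ModInv g S A) :
    ModInv g S (⋃₀ 𝒜) := by
  rintro _ ⟨x, ⟨⟨A, hA, hx⟩, hxS⟩, rfl⟩
  exact ⟨A, hA, h A hA ⟨x, ⟨hx, hxS⟩, rfl⟩⟩

lemma img_closure_subset (hreg1 : ∀ O : Set X, IsOpen O → IsOpen (g ⁻¹' O \ S))
    (A : Set X) : g '' (closure A \ S) ⊆ closure (g '' (A \ S)) := by
  rintro _ ⟨x, ⟨hx, hxS⟩, rfl⟩
  rw [mem_closure_iff]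
  intro O hO hgx
  have hQ : IsOpen (g ⁻¹' O \ S) := hreg1 O hO
  obtain ⟨a, haQ, haA⟩ := mem_closure_iff.mp hx _ hQ ⟨hgx, hxS⟩
  exact ⟨g a, haQ.1, ⟨a, ⟨haA, haQ.2⟩, rfl⟩⟩

lemma modInv_closure (hreg1 : ∀ O : Set X, IsOpen O → IsOpen (g ⁻¹' O \ S))
    {A : Set X} (hA : ModInv g S A) : ModInv g S (closure A) := by
  intro y hy
  have h1 : y ∈ closure (g '' (A \ S)) := img_closure_subset hreg1 A hy
  exact closure_mono hA h1

lemma modInv_interior (hreg2 : ∀ O : Set X, IsOpen O → IsOpen (g '' (O \ S)))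
    {A : Set X} (hA : ModInv g S A) : ModInv g S (interior A) := by
  have h1 : g '' (interior A \ S) ⊆ A := fun y hy =>
    hA (image_mono (f := g) (diff_subset_diff_left interior_subset) hy)
  exact interior_maximal h1 (hreg2 _ isOpen_interior)

lemma modInv_intCl (hreg1 : ∀ O : Set X, IsOpen O → IsOpen (g ⁻¹' O \ S))
    (hreg2 : ∀ O : Set X, IsOpen O → IsOpen (g '' (O \ S)))
    {A : Set X} (hA : ModInv g S A) : ModInv g S (interior (closure A)) :=
  modInv_interior hreg2 (modInv_closure hreg1 hA)

lemma modInv_compl_intCl (hreg1 : ∀ O : Set X, IsOpen O → IsOpen (g ⁻¹' O \ S))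
    (hreg2 : ∀ O : Set X, IsOpen O → IsOpen (g '' (O \ S)))
    {A : Set X} (hA : ModInv g S Aᶜ) : ModInv g S (interior (closure A))ᶜ := by
  have h1 : closure (interior Aᶜ) = (interior (closure A))ᶜ := by
    rw [interior_compl, closure_compl]
  rw [← h1]
  exact modInv_closure hreg1 (modInv_interior hreg2 hA)

lemma fullInv_intCl (hreg1 : ∀ O : Set X, IsOpen O → IsOpen (g ⁻¹' O \ S))
    (hreg2 : ∀ O : Set X, IsOpen O → IsOpen (g '' (O \ S)))
    {A : Set X} (hA : FullInv g S A) : FullInv g S (interior (closure A)) :=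
  ⟨modInv_intCl hreg1 hreg2 hA.1, modInv_compl_intCl hreg1 hreg2 hA.2⟩

end AuxInv

/-- The forward orbit stages of a set, avoiding `S`. -/
def orbN (g : X → X) (S A : Set X) : ℕ → Set X
  | 0 => A
  | n + 1 => g '' (orbN g S A n \ S)

/-- Backward reach stages of a set, avoiding `S`. -/
def rchN (g : X → X) (S A : Set X) : ℕ → Set X
  | 0 => A
  | n + 1 => g ⁻¹' (rchN g S A n) \ S

/-- The regular-open hull of the orbit of a set. -/
def hullSet (g : X → X) (S A : Set X) : Set X :=
  interior (closure (⋃ n, orbN g S A n))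

section AuxOrb

variable {X : Type*} [TopologicalSpace X] {g : X → X} {S : Set X}

lemma orbN_mono {A B : Set X} (h : A ⊆ B) : ∀ n, orbN g S A n ⊆ orbN g S B n := by
  intro n
  induction n with
  | zero => exact h
  | succ n ih => exact image_mono (f := g) (diff_subset_diff_left ih)

lemma orbN_open (hreg2 : ∀ O : Set X, IsOpen O → IsOpen (g '' (O \ S)))
    {A : Set X} (hA : IsOpen A) : ∀ n, IsOpen (orbN g S A n) := by
  intro n
  induction n with
  | zero => exact hA
  | succ n ih => exact hreg2 _ ih

lemma orbN_nonempty (hS : interior S = ∅)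
    (hreg2 : ∀ O : Set X, IsOpen O → IsOpen (g '' (O \ S)))
    {A : Set X} (hA : IsOpen A) (hne : A.Nonempty) : ∀ n, (orbN g S A n).Nonempty := by
  intro n
  induction n with
  | zero => exact hne
  | succ n ih =>
    obtain ⟨x, hx⟩ := nonempty_diff_of_open hS (orbN_open hreg2 hA n) ih
    exact ⟨g x, ⟨x, hx, rfl⟩⟩

lemma orbN_subset_of_modInv {A C : Set X} (hC : ModInv g S C) (hAC : A ⊆ C) :
    ∀ n, orbN g S A n ⊆ C := by
  intro n
  induction n with
  | zero => exact hAC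
  | succ n ih =>
    rintro _ ⟨x, ⟨hx, hxS⟩, rfl⟩
    exact hC ⟨x, ⟨ih hx, hxS⟩, rfl⟩

lemma modInv_iUnion_orbN {A : Set X} : ModInv g S (⋃ n, orbN g S A n) := by
  rintro _ ⟨x, ⟨hx, hxS⟩, rfl⟩
  obtain ⟨n, hn⟩ := mem_iUnion.mp hx
  exact mem_iUnion.mpr ⟨n + 1, ⟨x, ⟨hn, hxS⟩, rfl⟩⟩

lemma orbN_shift {A : Set X} : ∀ n, orbN g S (g '' (A \ S)) n = orbN g S A (n + 1) := by
  intro n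
  induction n with
  | zero => rfl
  | succ n ih => show g '' (orbN g S (g '' (A \ S)) n \ S) = _; rw [ih]; rfl

lemma subset_hullSet {A : Set X} (hA : IsOpen A) : A ⊆ hullSet g S A :=
  interior_maximal ((subset_iUnion (orbN g S A) 0).trans subset_closure) hA

lemma hullSet_coInv (hS : interior S = ∅)
    (hreg1 : ∀ O : Set X, IsOpen O → IsOpen (g ⁻¹' O \ S))
    (hreg2 : ∀ O : Set X, IsOpen O → IsOpen (g '' (O \ S)))
    {A : Set X} (hA : IsOpen A) (hne : A.Nonempty) : hullSet g S A ∈ CoInv g S := by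
  refine ⟨?_, ?_, ?_⟩
  · obtain ⟨x, hx⟩ := hne
    exact ⟨x, subset_hullSet hA hx⟩
  · exact regOpen_intCl (isOpen_iUnion (orbN_open hreg2 hA))
  · exact modInv_intCl hreg1 hreg2 modInv_iUnion_orbN

lemma hullSet_subset (hreg1 : ∀ O : Set X, IsOpen O → IsOpen (g ⁻¹' O \ S))
    {A V : Set X} (hV : RegOpen V) (hVm : ModInv g S V) (hAV : A ⊆ V) :
    hullSet g S A ⊆ V := by
  have h1 : ∀ n, orbN g S A n ⊆ closure V :=
    orbN_subset_of_modInv (modInv_closure hreg1 hVm) (hAV.trans subset_closure)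
  have h2 : hullSet g S A ⊆ interior (closure (closure V)) :=
    intCl_mono (iUnion_subset h1)
  rw [closure_closure] at h2
  rw [hV]
  exact h2

lemma hullSet_subset_compl {A E : Set X} (hE : IsOpen E) (hEm : ModInv g S Eᶜ)
    (hAE : A ⊆ Eᶜ) : hullSet g S A ⊆ Eᶜ := by
  have h1 : ∀ n, orbN g S A n ⊆ Eᶜ := orbN_subset_of_modInv hEm hAE
  have h2 : closure (⋃ n, orbN g S A n) ⊆ Eᶜ :=
    closure_minimal (iUnion_subset h1) hE.isClosed_compl
  exact interior_subset.trans h2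

lemma mem_rchN {A : Set X} {x : X} :
    ∀ n, x ∈ rchN g S A n ↔ (∀ k < n, g^[k] x ∉ S) ∧ g^[n] x ∈ A := by
  intro n
  induction n generalizing x with
  | zero => simp [rchN]
  | succ n ih =>
    constructor
    · rintro ⟨hgx, hxS⟩
      obtain ⟨hk, hn⟩ := ih.mp hgx
      refine ⟨?_, ?_⟩
      · intro k hk'
        match k with
        | 0 => simpa using hxS
        | j + 1 =>
          rw [Function.iterate_succ_apply]
          exact hk j (by omega)
      · rw [Function.iterate_succ_apply]
        exact hn
    · rintro ⟨hk, hn⟩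
      refine ⟨ih.mpr ⟨?_, ?_⟩, by simpa using hk 0 (by omega)⟩
      · intro k hk'
        rw [← Function.iterate_succ_apply]
        exact hk (k + 1) (by omega)
      · rw [← Function.iterate_succ_apply]
        exact hn

lemma rchN_open (hreg1 : ∀ O : Set X, IsOpen O → IsOpen (g ⁻¹' O \ S))
    {A : Set X} (hA : IsOpen A) : ∀ n, IsOpen (rchN g S A n) := by
  intro n
  induction n with
  | zero => exact hA
  | succ n ih => exact hreg1 _ ih

lemma reach_eq_iUnion {A : Set X} : Reach g S A = ⋃ n, rchN g S A n := by
  ext x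
  simp only [Reach, mem_setOf_eq, mem_iUnion, mem_rchN]

lemma reach_open (hreg1 : ∀ O : Set X, IsOpen O → IsOpen (g ⁻¹' O \ S))
    {A : Set X} (hA : IsOpen A) : IsOpen (Reach g S A) := by
  rw [reach_eq_iUnion]
  exact isOpen_iUnion (rchN_open hreg1 hA)

lemma subset_reach {A : Set X} : A ⊆ Reach g S A := by
  intro x hx
  exact ⟨0, by omega, by simpa using hx⟩

lemma modInv_reach {A : Set X} (hA : ModInv g S A) : ModInv g S (Reach g S A) := by
  rintro _ ⟨x, ⟨⟨n, hk, hn⟩, hxS⟩, rfl⟩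
  match n with
  | 0 =>
    have hxA : x ∈ A := by simpa using hn
    exact subset_reach (hA ⟨x, ⟨hxA, hxS⟩, rfl⟩)
  | m + 1 =>
    refine ⟨m, ?_, ?_⟩
    · intro k hk'
      rw [← Function.iterate_succ_apply]
      exact hk (k + 1) (by omega)
    · rw [← Function.iterate_succ_apply]
      exact hn

lemma modInv_compl_reach {A : Set X} : ModInv g S (Reach g S A)ᶜ := by
  rintro _ ⟨x, ⟨hx, hxS⟩, rfl⟩
  intro hgx
  obtain ⟨n, hk, hn⟩ := hgx
  refine hx ⟨n + 1, ?_, ?_⟩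
  · intro k hk'
    match k with
    | 0 => simpa using hxS
    | j + 1 =>
      rw [Function.iterate_succ_apply]
      exact hk j (by omega)
  · rw [Function.iterate_succ_apply]
    exact hn

lemma orbN_rchN_key {U B : Set X} (hU : ModInv g S U) :
    ∀ n, orbN g S (U ∩ rchN g S B n) n ⊆ U ∩ B := by
  intro n
  induction n with
  | zero => exact Subset.rfl
  | succ n ih =>
    have h1 : g '' ((U ∩ rchN g S B (n + 1)) \ S) ⊆ U ∩ rchN g S B n := by
      rintro _ ⟨x, ⟨⟨hxU, hxr⟩, hxS⟩, rfl⟩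
      exact ⟨hU ⟨x, ⟨hxU, hxS⟩, rfl⟩, hxr.1⟩
    have h2 : orbN g S (U ∩ rchN g S B (n + 1)) (n + 1)
        = orbN g S (g '' ((U ∩ rchN g S B (n + 1)) \ S)) n := (orbN_shift n).symm
    rw [h2]
    exact (orbN_mono h1 n).trans ih

end AuxOrb
lemma part1_aux {X : Type*} [TopologicalSpace X] {g : X → X} {S : Set X}
    (hS : interior S = ∅)
    (hreg1 : ∀ O : Set X, IsOpen O → IsOpen (g ⁻¹' O \ S))
    (hreg2 : ∀ O : Set X, IsOpen O → IsOpen (g '' (O \ S)))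
    (γ : ℕ → Set X) (hγ : IsCascade g S γ) : MinCofInv g S (Domain g S γ) := by
  obtain ⟨hmono, hmem, htrans⟩ := hγ
  set 𝒲 : Set (Set X) := {U | U ∈ CoInv g S ∧ γ 0 ⊆ U ∧
    ∀ V ∈ CoInv g S, (V ∩ U).Nonempty → ∃ m, γ m ⊆ V} with h𝒲def
  set D : Set X := interior (closure (⋃₀ 𝒲)) with hDdef
  have hDom : Domain g S γ = D := rfl
  rw [hDom]
  have hWopen : ∀ U ∈ 𝒲, IsOpen U := fun U hU => regOpen_isOpen hU.1.2.1
  have hUopen : IsOpen (⋃₀ 𝒲) := isOpen_sUnion hWopen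
  have hγ0W : γ 0 ∈ 𝒲 := ⟨hmem 0, Subset.rfl, fun V hV hne => htrans V hV hne⟩
  have hsub : ⋃₀ 𝒲 ⊆ D := open_subset_intCl hUopen
  have hmax : ∀ U ∈ 𝒲, U ⊆ D := fun U hU => (subset_sUnion_of_mem hU).trans hsub
  have hγ0D : γ 0 ⊆ D := hmax _ hγ0W
  have hDne : D.Nonempty := (hmem 0).1.mono hγ0D
  have hDreg : RegOpen D := regOpen_intCl hUopen
  have hDopen : IsOpen D := regOpen_isOpen hDreg
  have hWmod : ModInv g S (⋃₀ 𝒲) := modInv_sUnion fun U hU => hU.1.2.2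
  have hDmod : ModInv g S D := modInv_intCl hreg1 hreg2 hWmod
  have hDco : D ∈ CoInv g S := ⟨hDne, hDreg, hDmod⟩
  -- the transitivity property of D
  have hT : ∀ V ∈ CoInv g S, (V ∩ D).Nonempty → ∃ m, γ m ⊆ V := by
    intro V hV hne
    have h1 : (V ∩ ⋃₀ 𝒲).Nonempty := by
      refine open_inter_nonempty_of_closure (regOpen_isOpen hV.2.1) (hne.mono ?_)
      exact inter_subset_inter_right V (interior_subset)
    obtain ⟨x, hxV, U, hU, hxU⟩ := h1
    exact hU.2.2 V hV ⟨x, hxV, hxU⟩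
  have hDW : D ∈ 𝒲 := ⟨hDco, hγ0D, hT⟩
  -- the complement of D is mod-invariant
  have hcompl : ModInv g S Dᶜ := by
    rintro _ ⟨x, ⟨hxD, hxS⟩, rfl⟩
    by_contra hgx
    rw [mem_compl_iff, not_not] at hgx
    have hQo : IsOpen (g ⁻¹' D \ S) := hreg1 D hDopen
    have hxQ : x ∈ g ⁻¹' D \ S := ⟨hgx, hxS⟩
    set O : Set X := (g ⁻¹' D \ S) \ closure D with hOdef
    have hOne : O.Nonempty := by
      rw [hOdef, Set.diff_nonempty]
      intro hc
      have h2 : x ∈ interior (closure D) := interior_maximal hc hQo hxQ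
      rw [← hDreg] at h2
      exact hxD h2
    have hOopen : IsOpen O := hQo.sdiff isClosed_closure
    have hOD : g '' O ⊆ D := by
      rintro _ ⟨y, hy, rfl⟩
      exact hy.1.1
    have hODdisj : O ∩ D = ∅ := by
      rw [Set.eq_empty_iff_forall_notMem]
      rintro y ⟨hyO, hyD⟩
      exact hyO.2 (subset_closure hyD)
    have hOS : O ∩ S = ∅ := by
      rw [Set.eq_empty_iff_forall_notMem]
      rintro y ⟨hyO, hyS⟩
      exact hyO.1.2 hyS
    set U' : Set X := interior (closure (O ∪ ⋃₀ 𝒲)) with hU'def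
    have hOWopen : IsOpen (O ∪ ⋃₀ 𝒲) := hOopen.union hUopen
    have hOWmod : ModInv g S (O ∪ ⋃₀ 𝒲) := by
      rintro _ ⟨y, ⟨hy | hy, hyS⟩, rfl⟩
      · exact Or.inr (subset_sUnion_of_mem hDW (hOD ⟨y, hy, rfl⟩))
      · exact Or.inr (hWmod ⟨y, ⟨hy, hyS⟩, rfl⟩)
    have hOsub : O ⊆ U' := interior_maximal ((subset_union_left).trans subset_closure) hOopen
    have hU'W : U' ∈ 𝒲 := by
      refine ⟨⟨hOne.mono hOsub, regOpen_intCl hOWopen, modInv_intCl hreg1 hreg2 hOWmod⟩,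
        ((subset_sUnion_of_mem hγ0W).trans (subset_union_right)).trans
          (open_subset_intCl hOWopen), ?_⟩
      intro V hV hne
      have h1 : (V ∩ (O ∪ ⋃₀ 𝒲)).Nonempty := by
        refine open_inter_nonempty_of_closure (regOpen_isOpen hV.2.1) (hne.mono ?_)
        exact inter_subset_inter_right V interior_subset
      obtain ⟨y, hyV, hy⟩ := h1
      rcases hy with hyO | ⟨U, hU, hyU⟩
      · have hyS : y ∉ S := fun h => (Set.eq_empty_iff_forall_notMem.mp hOS y) ⟨hyO, h⟩
        have h2 : g y ∈ V := hV.2.2 ⟨y, ⟨hyV, hyS⟩, rfl⟩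
        have h3 : g y ∈ D := hOD ⟨y, hyO, rfl⟩
        exact hT V hV ⟨g y, h2, h3⟩
      · exact hU.2.2 V hV ⟨y, hyV, hyU⟩
    have h4 : U' ⊆ D := hmax _ hU'W
    obtain ⟨y, hy⟩ := hOne
    exact (Set.eq_empty_iff_forall_notMem.mp hODdisj y) ⟨hy, h4 (hOsub hy)⟩
  have hDcof : D ∈ CofInv g S := ⟨hDne, hDreg, hDmod, hcompl⟩
  refine ⟨hDcof, ?_⟩
  -- minimality
  intro E hE hED
  have hEco : E ∈ CoInv g S := ⟨hE.1, hE.2.1, hE.2.2.1⟩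
  have hEopen : IsOpen E := regOpen_isOpen hE.2.1
  obtain ⟨m0, hm0⟩ := hT E hEco (hE.1.mono fun x hx => ⟨hx, hED hx⟩)
  have hsubcl : ∀ U ∈ 𝒲, U ⊆ closure E := by
    intro U hU
    by_contra hc
    have hOne : (U \ closure E).Nonempty := Set.diff_nonempty.mpr hc
    set O : Set X := U \ closure E with hOdef
    have hOopen : IsOpen O := (hWopen U hU).sdiff isClosed_closure
    have hOEc : O ⊆ Eᶜ := fun y hy h => hy.2 (subset_closure h)
    set F : Set X := hullSet g S O with hFdef
    have hFco : F ∈ CoInv g S := hullSet_coInv hS hreg1 hreg2 hOopen hOne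
    have hFEc : F ⊆ Eᶜ := hullSet_subset_compl hEopen hE.2.2.2 hOEc
    obtain ⟨m1, hm1⟩ := hU.2.2 F hFco
      (hOne.mono fun y hy => ⟨subset_hullSet hOopen hy, hy.1⟩)
    obtain ⟨z, hz⟩ := (hmem (max m0 m1)).1
    exact hFEc (hm1 (hmono (le_max_right m0 m1) hz))
      (hm0 (hmono (le_max_left m0 m1) hz))
  have hDE : D ⊆ E := by
    have h1 : ⋃₀ 𝒲 ⊆ closure E := sUnion_subset hsubcl
    have h2 : D ⊆ interior (closure (closure E)) := intCl_mono h1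
    rw [closure_closure, ← hE.2.1] at h2
    exact h2
  exact Subset.antisymm hED hDE
theorem stmt12 {X : Type*} [MetricSpace X] [CompleteSpace X]
    [TopologicalSpace.SeparableSpace X] [∀ x : X, (𝓝[≠] x).NeBot]
    (g : X → X) (S : Set X) (hScl : IsClosed S) (hSnd : IsNowhereDense S)
    (hreg1 : ∀ O : Set X, IsOpen O → IsOpen (g ⁻¹' O \ S))
    (hreg2 : ∀ O : Set X, IsOpen O → IsOpen (g '' (O \ S))) :
    (∀ γ : ℕ → Set X, IsCascade g S γ → MinCofInv g S (Domain g S γ)) ∧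
    (∀ D : Set X, MinCofInv g S D → ∃ γ : ℕ → Set X, IsCascade g S γ ∧ D = Domain g S γ) := by
  classical
  have hS : interior S = ∅ := by
    have h : interior (closure S) = ∅ := hSnd
    rwa [hScl.closure_eq] at h
  refine ⟨fun γ hγ => part1_aux hS hreg1 hreg2 γ hγ, ?_⟩
  intro D hD
  obtain ⟨⟨hDne, hDreg, hDmod, hDcmod⟩, hDmin⟩ := hD
  have hDopen : IsOpen D := regOpen_isOpen hDreg
  have hDco : D ∈ CoInv g S := ⟨hDne, hDreg, hDmod⟩
  -- transitivity of D
  have htrans : ∀ V ∈ CoInv g S, (V ∩ D).Nonempty →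
      D ⊆ closure (Reach g S (V ∩ D)) := by
    intro V hV hne
    have hVopen : IsOpen V := regOpen_isOpen hV.2.1
    set P : Set X := Reach g S (V ∩ D) with hPdef
    have hPmod : ModInv g S P := modInv_reach (modInv_inter hV.2.2 hDmod)
    have hPcmod : ModInv g S Pᶜ := modInv_compl_reach
    have hPopen : IsOpen P := reach_open hreg1 (hVopen.inter hDopen)
    have hVDP : V ∩ D ⊆ P := subset_reach
    set E : Set X := interior (closure (P ∩ D)) with hEdef
    have hEfull : FullInv g S E := by
      refine fullInv_intCl hreg1 hreg2 ⟨modInv_inter hPmod hDmod, ?_⟩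
      rw [Set.compl_inter]
      exact modInv_union hPcmod hDcmod
    have hEne : E.Nonempty := by
      obtain ⟨z, hz⟩ := hne
      exact ⟨z, open_subset_intCl (hPopen.inter hDopen) ⟨hVDP hz, hz.2⟩⟩
    have hEcof : E ∈ CofInv g S := ⟨hEne, regOpen_intCl (hPopen.inter hDopen), hEfull⟩
    have hED : E ⊆ D := intCl_subset_of_regOpen inter_subset_right hDreg
    have hEeq : E = D := hDmin E hEcof hED
    rw [← hEeq]
    exact interior_subset.trans (closure_mono inter_subset_left)
  -- step lemma
  have step : ∀ H U : Set X, H ∈ CoInv g S → (H ∩ D).Nonempty → U ∈ CoInv g S → U ⊆ D →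
      ∃ U', U' ∈ CoInv g S ∧ U' ⊆ D ∧ U' ⊆ U ∧ U' ⊆ H := by
    intro H U hH hHD hU hUD
    have hHopen : IsOpen H := regOpen_isOpen hH.2.1
    have hUopen : IsOpen U := regOpen_isOpen hU.2.1
    obtain ⟨x, hxU⟩ := hU.1
    have hxcl : x ∈ closure (Reach g S (H ∩ D)) := htrans H hH hHD (hUD hxU)
    obtain ⟨y, hyU, hyR⟩ := mem_closure_iff.mp hxcl U hUopen hxU
    obtain ⟨n, hk, hn⟩ := hyR
    have hyr : y ∈ rchN g S (H ∩ D) n := (mem_rchN n).mpr ⟨hk, hn⟩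
    set O : Set X := U ∩ rchN g S (H ∩ D) n with hOdef
    have hOopen : IsOpen O := hUopen.inter (rchN_open hreg1 (hHopen.inter hDopen) n)
    have hOne : O.Nonempty := ⟨y, hyU, hyr⟩
    set A : Set X := orbN g S O n with hAdef
    have hAsub : A ⊆ U ∩ (H ∩ D) := orbN_rchN_key hU.2.2 n
    have hAopen : IsOpen A := orbN_open hreg2 hOopen n
    have hAne : A.Nonempty := orbN_nonempty hS hreg2 hOopen hOne n
    refine ⟨hullSet g S A, hullSet_coInv hS hreg1 hreg2 hAopen hAne, ?_, ?_, ?_⟩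
    · exact hullSet_subset hreg1 hDreg hDmod (hAsub.trans fun z hz => hz.2.2)
    · exact hullSet_subset hreg1 hU.2.1 hU.2.2 (hAsub.trans fun z hz => hz.1)
    · exact hullSet_subset hreg1 hH.2.1 hH.2.2 (hAsub.trans fun z hz => hz.2.1)
  -- countable basis
  obtain ⟨b, hbc, hbne', hbasis⟩ := TopologicalSpace.exists_countable_basis X
  obtain ⟨x0, hx0⟩ := hDco.1
  obtain ⟨B0, hB0b, _, _⟩ := hbasis.exists_subset_of_mem_open hx0 hDopen
  obtain ⟨e, he⟩ := hbc.exists_eq_range ⟨B0, hB0b⟩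
  have heopen : ∀ i, IsOpen (e i) := by
    intro i
    exact hbasis.isOpen (by rw [he]; exact mem_range_self i)
  set Hs : ℕ → Set X := fun i =>
    if h : (e i ∩ D).Nonempty then hullSet g S (e i ∩ D) else D with hHsdef
  have hHs : ∀ i, Hs i ∈ CoInv g S ∧ (Hs i ∩ D).Nonempty := by
    intro i
    by_cases h : (e i ∩ D).Nonempty
    · have hopen : IsOpen (e i ∩ D) := (heopen i).inter hDopen
      simp only [hHsdef, dif_pos h]
      refine ⟨hullSet_coInv hS hreg1 hreg2 hopen h, ?_⟩
      obtain ⟨z, hz⟩ := h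
      exact ⟨z, subset_hullSet hopen hz, hz.2⟩
    · simp only [hHsdef, dif_neg h]
      exact ⟨hDco, by simpa [inter_self] using hDne⟩
  have hHkey : ∀ V ∈ CoInv g S, (V ∩ D).Nonempty → ∃ i, Hs i ⊆ V := by
    intro V hV hne
    obtain ⟨x, hxV, hxD⟩ := hne
    obtain ⟨B, hBb, hxB, hBsub⟩ := hbasis.exists_subset_of_mem_open
      (⟨hxV, hxD⟩ : x ∈ V ∩ D) ((regOpen_isOpen hV.2.1).inter hDopen)
    rw [he] at hBb
    obtain ⟨i, rfl⟩ := hBb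
    have hne' : (e i ∩ D).Nonempty := ⟨x, hxB, hxD⟩
    refine ⟨i, ?_⟩
    simp only [hHsdef, dif_pos hne']
    exact hullSet_subset hreg1 hV.2.1 hV.2.2 fun z hz => (hBsub hz.1).1
  -- build the cascade by recursion
  choose F hF1 hF2 hF3 hF4 using step
  let T : Type _ := {p : Set X // p ∈ CoInv g S ∧ p ⊆ D}
  let Gstep : ℕ → T → T := fun n p =>
    ⟨F (Hs n) p.1 (hHs n).1 (hHs n).2 p.2.1 p.2.2,
     hF1 (Hs n) p.1 (hHs n).1 (hHs n).2 p.2.1 p.2.2,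
     hF2 (Hs n) p.1 (hHs n).1 (hHs n).2 p.2.1 p.2.2⟩
  let seq : ℕ → T := fun n => Nat.rec ⟨D, hDco, Subset.rfl⟩ Gstep n
  let γ : ℕ → Set X := fun n => (seq n).1
  have hγ0 : γ 0 = D := rfl
  have hγmem : ∀ n, γ n ∈ CoInv g S := fun n => (seq n).2.1
  have hsucc : ∀ n, γ (n + 1) ⊆ γ n ∧ γ (n + 1) ⊆ Hs n := fun n =>
    ⟨hF3 (Hs n) (seq n).1 (hHs n).1 (hHs n).2 (seq n).2.1 (seq n).2.2,
     hF4 (Hs n) (seq n).1 (hHs n).1 (hHs n).2 (seq n).2.1 (seq n).2.2⟩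
  have hanti : Antitone γ := antitone_nat_of_succ_le fun n => (hsucc n).1
  have hcasc3 : ∀ V ∈ CoInv g S, (V ∩ γ 0).Nonempty → ∃ m, γ m ⊆ V := by
    intro V hV hne
    rw [hγ0] at hne
    obtain ⟨i, hi⟩ := hHkey V hV hne
    exact ⟨i + 1, (hsucc i).2.trans hi⟩
  have hcasc : IsCascade g S γ := ⟨hanti, hγmem, hcasc3⟩
  refine ⟨γ, hcasc, ?_⟩
  have hmin := part1_aux hS hreg1 hreg2 γ hcasc
  have hDW : D ∈ {U | U ∈ CoInv g S ∧ γ 0 ⊆ U ∧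
      ∀ V ∈ CoInv g S, (V ∩ U).Nonempty → ∃ m, γ m ⊆ V} := by
    refine ⟨hDco, hγ0 ▸ Subset.rfl, ?_⟩
    intro V hV hne
    obtain ⟨i, hi⟩ := hHkey V hV hne
    exact ⟨i + 1, (hsucc i).2.trans hi⟩
  have hDsub : D ⊆ Domain g S γ := by
    refine (subset_sUnion_of_mem hDW).trans (open_subset_intCl ?_)
    exact isOpen_sUnion fun U hU => regOpen_isOpen hU.1.2.1
  exact hmin.2 D ⟨hDne, hDreg, hDmod, hDcmod⟩ hDsub
end

section
/- If γ = (U_n)_{n≥1} and γ' = (U'_n)_{n≥1} are transitive cascades with D_γ = D_{γ'}, then γ and γ' are mutually cofinal: for each p ≥ 1 there exist q, r ≥ 1 with U_q ⊆ U'_p and U'_r ⊆ U_p. In particular C_γ = C_{γ'}. -/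
open Set Topology Function

variable {X : Type*}

variable [TopologicalSpace X]

theorem cascade_cofinal_aux {X : Type*} [TopologicalSpace X] (g : X → X) (S : Set X)
    (δ δ' : ℕ → Set X) (hδ : IsCascade g S δ) (hδ' : IsCascade g S δ')
    (hsub : Domain g S δ' ⊆ Domain g S δ) : ∀ p, ∃ q, δ q ⊆ δ' p := by
  intro p
  obtain ⟨hm, hc, ht⟩ := hδ
  obtain ⟨hm', hc', ht'⟩ := hδ'
  obtain ⟨hne, hro, hmi⟩ := hc' p
  have hopen : IsOpen (δ' p) := by rw [hro]; exact isOpen_interior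
  have h0sub : δ' 0 ⊆ Domain g S δ' := by
    have h1 : δ' 0 ⊆ ⋃₀ {U | U ∈ CoInv g S ∧ δ' 0 ⊆ U ∧
        ∀ V ∈ CoInv g S, (V ∩ U).Nonempty → ∃ m, δ' m ⊆ V} :=
      subset_sUnion_of_mem ⟨hc' 0, subset_rfl, ht'⟩
    have hopen0 : IsOpen (δ' 0) := by rw [(hc' 0).2.1]; exact isOpen_interior
    exact interior_maximal (h1.trans subset_closure) hopen0
  have hpsub : δ' p ⊆ closure (⋃₀ {U | U ∈ CoInv g S ∧ δ 0 ⊆ U ∧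
      ∀ V ∈ CoInv g S, (V ∩ U).Nonempty → ∃ m, δ m ⊆ V}) :=
    fun x hx => interior_subset (hsub (h0sub (hm' (Nat.zero_le p) hx)))
  obtain ⟨x, hx⟩ := hne
  obtain ⟨y, hyO, hyA⟩ := mem_closure_iff.mp (hpsub hx) (δ' p) hopen hx
  obtain ⟨U, hU, hyU⟩ := hyA
  exact hU.2.2 (δ' p) ⟨⟨x, hx⟩, hro, hmi⟩ ⟨y, hyO, hyU⟩

theorem stmt13 {X : Type*} [MetricSpace X] [CompleteSpace X]
    [TopologicalSpace.SeparableSpace X] [∀ x : X, (𝓝[≠] x).NeBot]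
    (g : X → X) (S : Set X) (hScl : IsClosed S) (hSnd : IsNowhereDense S)
    (hreg1 : ∀ O : Set X, IsOpen O → IsOpen (g ⁻¹' O \ S))
    (hreg2 : ∀ O : Set X, IsOpen O → IsOpen (g '' (O \ S))) (γ γ' : ℕ → Set X)
    (hγ : IsCascade g S γ) (hγ' : IsCascade g S γ')
    (hD : Domain g S γ = Domain g S γ') :
    (∀ p : ℕ, ∃ q : ℕ, γ q ⊆ γ' p) ∧ (∀ p : ℕ, ∃ r : ℕ, γ' r ⊆ γ p) ∧
      Core γ = Core γ' := by
  have h1 : ∀ p, ∃ q, γ q ⊆ γ' p := cascade_cofinal_aux g S γ γ' hγ hγ' hD.ge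
  have h2 : ∀ p, ∃ r, γ' r ⊆ γ p := cascade_cofinal_aux g S γ' γ hγ' hγ hD.le
  refine ⟨h1, h2, ?_⟩
  apply subset_antisymm
  · intro x hx
    simp only [Core, mem_iInter] at hx ⊢
    intro p
    obtain ⟨q, hq⟩ := h1 p
    exact closure_mono hq (hx q)
  · intro x hx
    simp only [Core, mem_iInter] at hx ⊢
    intro p
    obtain ⟨r, hr⟩ := h2 p
    exact closure_mono hr (hx r)
end

section
/- For U ∈ coInv(f) the following are equivalent: (1) U is transitive; (2) U ⊆ int(cl(R(O))) for each nonempty open set O ⊆ U; (3) U = int(cl(U_*)), where U_* = { x ∈ U : U = int(cl(⟨{x}⟩)) }; (4) U = int(cl(⟨{x}⟩)) for some x ∈ U. -/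
open Set Topology Function

variable {X : Type*}

variable [TopologicalSpace X]

section Aux15

variable {Y : Type*} [TopologicalSpace Y]

lemma regOpen_interior_closure15 (A : Set Y) : RegOpen (interior (closure A)) := by
  refine subset_antisymm ?_ ?_
  · exact interior_maximal subset_closure isOpen_interior
  · exact interior_mono (closure_minimal interior_subset isClosed_closure)

lemma reach_of_apply15 {g : Y → Y} {S O : Set Y} {x : Y} (hx : x ∉ S)
    (h : g x ∈ Reach g S O) : x ∈ Reach g S O := by
  obtain ⟨n, hpath, hmem⟩ := h
  refine ⟨n + 1, fun k hk => ?_, ?_⟩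
  · cases k with
    | zero => simpa using hx
    | succ k => rw [Function.iterate_succ_apply]; exact hpath k (by omega)
  · rw [Function.iterate_succ_apply]; exact hmem

lemma mem_reach_self15 {g : Y → Y} {S O : Set Y} {x : Y} (hx : x ∈ O) : x ∈ Reach g S O :=
  ⟨0, fun k hk => absurd hk (by omega), by simpa using hx⟩

lemma isOpen_reach15 {g : Y → Y} {S : Set Y}
    (hreg1 : ∀ O : Set Y, IsOpen O → IsOpen (g ⁻¹' O \ S)) {O : Set Y} (hO : IsOpen O) :
    IsOpen (Reach g S O) := by
  have key : ∀ n : ℕ, IsOpen {x : Y | (∀ k < n, g^[k] x ∉ S) ∧ g^[n] x ∈ O} := by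
    intro n
    induction n with
    | zero =>
        have : {x : Y | (∀ k < 0, g^[k] x ∉ S) ∧ g^[0] x ∈ O} = O := by
          ext x; simp
        rw [this]; exact hO
    | succ n ih =>
        have : {x : Y | (∀ k < n + 1, g^[k] x ∉ S) ∧ g^[n + 1] x ∈ O}
            = g ⁻¹' {x : Y | (∀ k < n, g^[k] x ∉ S) ∧ g^[n] x ∈ O} \ S := by
          ext x
          simp only [mem_setOf_eq, mem_diff, mem_preimage]
          constructor
          · rintro ⟨h1, h2⟩
            refine ⟨⟨fun k hk => ?_, ?_⟩, ?_⟩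
            · rw [← Function.iterate_succ_apply]; exact h1 (k + 1) (by omega)
            · rw [← Function.iterate_succ_apply]; exact h2
            · simpa using h1 0 (by omega)
          · rintro ⟨⟨h1, h2⟩, h3⟩
            refine ⟨fun k hk => ?_, ?_⟩
            · cases k with
              | zero => simpa using h3
              | succ k => rw [Function.iterate_succ_apply]; exact h1 k (by omega)
            · rw [Function.iterate_succ_apply]; exact h2
        rw [this]; exact hreg1 _ ih
  have : Reach g S O = ⋃ n, {x : Y | (∀ k < n, g^[k] x ∉ S) ∧ g^[n] x ∈ O} := by
    ext x; simp [Reach, mem_iUnion]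
  rw [this]; exact isOpen_iUnion key

lemma modInv_iterate15 {g : Y → Y} {S B : Set Y} (hB : ModInv g S B) {x : Y} (hx : x ∈ B)
    {n : ℕ} (hpath : ∀ k < n, g^[k] x ∉ S) : g^[n] x ∈ B := by
  induction n with
  | zero => simpa using hx
  | succ n ih =>
      rw [Function.iterate_succ_apply']
      exact hB ⟨g^[n] x, ⟨ih (fun k hk => hpath k (by omega)), hpath n (by omega)⟩, rfl⟩

lemma modInv_modHull15 (g : Y → Y) (S A : Set Y) : ModInv g S (modHull g S A) := by
  rintro y ⟨z, ⟨hz1, hz2⟩, rfl⟩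
  rw [modHull, mem_sInter]
  intro B hB
  exact hB.1 ⟨z, ⟨(mem_sInter.mp hz1) B hB, hz2⟩, rfl⟩

lemma subset_modHull15 (g : Y → Y) (S A : Set Y) : A ⊆ modHull g S A := by
  intro x hx
  rw [modHull, mem_sInter]
  exact fun B hB => hB.2 hx

lemma modHull_singleton_subset15 (g : Y → Y) (S : Set Y) (x : Y) :
    modHull g S {x} ⊆ {y | ∃ n, (∀ k < n, g^[k] x ∉ S) ∧ g^[n] x = y} := by
  apply sInter_subset_of_mem
  constructor
  · rintro y ⟨z, ⟨⟨n, hp, rfl⟩, hzS⟩, rfl⟩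
    refine ⟨n + 1, fun k hk => ?_, by rw [Function.iterate_succ_apply']⟩
    rcases Nat.lt_succ_iff_lt_or_eq.mp hk with h | h
    · exact hp k h
    · subst h; exact hzS
  · intro y hy
    rw [mem_singleton_iff] at hy
    subst hy
    exact ⟨0, fun k hk => absurd hk (by omega), by simp⟩

lemma finite_open_empty15 {Z : Type*} [TopologicalSpace Z] [T1Space Z]
    [∀ x : Z, (𝓝[≠] x).NeBot] {E : Set Z} (hfin : E.Finite) (hop : IsOpen E) : E = ∅ := by
  by_contra h
  obtain ⟨p, hp⟩ := nonempty_iff_ne_empty.mpr h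
  have hclosed : IsClosed (E \ {p}) := (hfin.subset diff_subset).isClosed
  have hopen : IsOpen ({p} : Set Z) := by
    have heq : ({p} : Set Z) = E ∩ (E \ {p})ᶜ := by
      ext z
      simp only [mem_singleton_iff, mem_inter_iff, mem_compl_iff, mem_diff, not_and, not_not]
      constructor
      · rintro rfl; exact ⟨hp, fun _ => rfl⟩
      · rintro ⟨h1, h2⟩; exact h2 h1
    rw [heq]; exact hop.inter hclosed.isOpen_compl
  have h1 : ({p} : Set Z) ∈ 𝓝[≠] p := mem_nhdsWithin_of_mem_nhds (hopen.mem_nhds rfl)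
  have h2 : ({p}ᶜ : Set Z) ∈ 𝓝[≠] p := self_mem_nhdsWithin
  have := Filter.nonempty_of_mem (Filter.inter_mem h1 h2)
  simp at this

lemma interior_finite_union_subset_closure15 {Z : Type*} [TopologicalSpace Z] [T1Space Z]
    [∀ x : Z, (𝓝[≠] x).NeBot] {F V : Set Z} (hF : F.Finite) :
    interior (F ∪ closure V) ⊆ closure V := by
  intro z hz
  rw [mem_closure_iff]
  intro o ho hzo
  set N := o ∩ interior (F ∪ closure V) with hN
  have hNopen : IsOpen N := ho.inter isOpen_interior
  have hzN : z ∈ N := ⟨hzo, hz⟩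
  have hNsub : N ⊆ F ∪ closure V := fun w hw => interior_subset hw.2
  by_cases hc : (N \ F).Nonempty
  · obtain ⟨w, hwN, hwF⟩ := hc
    have hwcl : w ∈ closure V := (hNsub hwN).resolve_left hwF
    rw [mem_closure_iff] at hwcl
    obtain ⟨v, hv1, hv2⟩ := hwcl _ (hNopen.sdiff hF.isClosed) ⟨hwN, hwF⟩
    exact ⟨v, hv1.1.1, hv2⟩
  · rw [not_nonempty_iff_eq_empty, diff_eq_empty] at hc
    have := finite_open_empty15 (hF.subset hc) hNopen
    rw [this] at hzN
    exact absurd hzN (notMem_empty z)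

lemma modInv_interior_closure15 {g : Y → Y} {S : Set Y}
    (hreg1 : ∀ O : Set Y, IsOpen O → IsOpen (g ⁻¹' O \ S))
    (hreg2 : ∀ O : Set Y, IsOpen O → IsOpen (g '' (O \ S)))
    {A : Set Y} (hA : ModInv g S A) : ModInv g S (interior (closure A)) := by
  have h1 : g '' (interior (closure A) \ S) ⊆ closure A := by
    rintro y ⟨x, ⟨hx1, hx2⟩, rfl⟩
    rw [mem_closure_iff]
    intro o ho hgo
    have hW : IsOpen ((g ⁻¹' o \ S) ∩ interior (closure A)) :=
      (hreg1 o ho).inter isOpen_interior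
    have hxW : x ∈ (g ⁻¹' o \ S) ∩ interior (closure A) := ⟨⟨hgo, hx2⟩, hx1⟩
    have hx3 : x ∈ closure A := interior_subset hx1
    rw [mem_closure_iff] at hx3
    obtain ⟨a, ⟨⟨hao, haS⟩, _⟩, haA⟩ := hx3 _ hW hxW
    exact ⟨g a, hao, hA ⟨a, ⟨haA, haS⟩, rfl⟩⟩
  exact interior_maximal h1 (hreg2 _ isOpen_interior)

end Aux15

theorem stmt15 {X : Type*} [MetricSpace X] [CompleteSpace X]
    [TopologicalSpace.SeparableSpace X] [∀ x : X, (𝓝[≠] x).NeBot]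
    (g : X → X) (S : Set X) (hScl : IsClosed S) (hSnd : IsNowhereDense S)
    (hreg1 : ∀ O : Set X, IsOpen O → IsOpen (g ⁻¹' O \ S))
    (hreg2 : ∀ O : Set X, IsOpen O → IsOpen (g '' (O \ S))) (U : Set X) (hU : U ∈ CoInv g S) :
    (TransElem g S U ↔
        ∀ O : Set X, IsOpen O → O.Nonempty → O ⊆ U → U ⊆ interior (closure (Reach g S O))) ∧
    ((∀ O : Set X, IsOpen O → O.Nonempty → O ⊆ U → U ⊆ interior (closure (Reach g S O))) ↔
        U = interior (closure {x ∈ U | U = interior (closure (modHull g S {x}))})) ∧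
    (U = interior (closure {x ∈ U | U = interior (closure (modHull g S {x}))}) ↔
        ∃ x ∈ U, U = interior (closure (modHull g S {x}))) := by
  obtain ⟨hUne, hUreg, hUinv⟩ := hU
  have hUopen : IsOpen U := by rw [hUreg]; exact isOpen_interior
  -- (1) → (2)
  have h12 : TransElem g S U →
      ∀ O : Set X, IsOpen O → O.Nonempty → O ⊆ U → U ⊆ interior (closure (Reach g S O)) := by
    intro hT O hO hOne hOU
    have hAinv : ModInv g S (U \ Reach g S O) := by
      rintro y ⟨z, ⟨⟨hzU, hzR⟩, hzS⟩, rfl⟩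
      exact ⟨hUinv ⟨z, ⟨hzU, hzS⟩, rfl⟩, fun hgz => hzR (reach_of_apply15 hzS hgz)⟩
    have hVinv := modInv_interior_closure15 hreg1 hreg2 hAinv
    have hVsub : interior (closure (U \ Reach g S O)) ⊆ U := by
      refine subset_trans (interior_mono (closure_mono diff_subset)) ?_
      rw [← hUreg]
    have hVempty : interior (closure (U \ Reach g S O)) = ∅ := by
      by_contra hne
      have hVco : interior (closure (U \ Reach g S O)) ∈ CoInv g S :=
        ⟨nonempty_iff_ne_empty.mpr hne, regOpen_interior_closure15 _, hVinv⟩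
      have heq := hT.2 _ hVco hVsub
      obtain ⟨p, hp⟩ := hOne
      have hpU : p ∈ U := hOU hp
      rw [← heq] at hpU
      have hsub : U \ Reach g S O ⊆ Oᶜ :=
        fun z hz hzO => hz.2 (mem_reach_self15 hzO)
      have : p ∈ Oᶜ :=
        closure_minimal hsub hO.isClosed_compl (interior_subset hpU)
      exact this hp
    have hsubcl : U ⊆ closure (Reach g S O) := by
      intro z hzU
      by_contra hzc
      have hop : IsOpen (U \ closure (Reach g S O)) := hUopen.sdiff isClosed_closure
      have hsub : U \ closure (Reach g S O) ⊆ U \ Reach g S O :=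
        fun w hw => ⟨hw.1, fun h => hw.2 (subset_closure h)⟩
      have : z ∈ interior (closure (U \ Reach g S O)) :=
        interior_maximal (subset_trans hsub subset_closure) hop ⟨hzU, hzc⟩
      rw [hVempty] at this
      exact this
    exact interior_maximal hsubcl hUopen
  -- (2) → (1)
  have h21 : (∀ O : Set X, IsOpen O → O.Nonempty → O ⊆ U →
      U ⊆ interior (closure (Reach g S O))) → TransElem g S U := by
    intro h2
    refine ⟨⟨hUne, hUreg, hUinv⟩, fun V hV hVU => ?_⟩
    obtain ⟨hVne, hVreg, hVinv⟩ := hV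
    have hVopen : IsOpen V := by rw [hVreg]; exact isOpen_interior
    have hUclV : U ⊆ closure V := by
      by_contra hnc
      obtain ⟨z, hzU, hzV⟩ := not_subset.mp hnc
      have hWopen : IsOpen (U \ closure V) := hUopen.sdiff isClosed_closure
      have hsub := h2 _ hWopen ⟨z, hzU, hzV⟩ diff_subset
      obtain ⟨v, hvV⟩ := hVne
      have hvcl : v ∈ closure (Reach g S (U \ closure V)) :=
        interior_subset (hsub (hVU hvV))
      rw [mem_closure_iff] at hvcl
      obtain ⟨w, hwV, hwR⟩ := hvcl V hVopen hvV
      obtain ⟨n, hpath, hmem⟩ := hwR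
      exact hmem.2 (subset_closure (modInv_iterate15 hVinv hwV hpath))
    have hUV : U ⊆ V := by rw [hVreg]; exact interior_maximal hUclV hUopen
    exact subset_antisymm hVU hUV
  -- (2) → (3)
  have h23 : (∀ O : Set X, IsOpen O → O.Nonempty → O ⊆ U →
      U ⊆ interior (closure (Reach g S O))) →
      U = interior (closure {x ∈ U | U = interior (closure (modHull g S {x}))}) := by
    intro h2
    have hsub1 : interior (closure {x ∈ U | U = interior (closure (modHull g S {x}))}) ⊆ U := by
      refine subset_trans (interior_mono (closure_mono (sep_subset _ _))) ?_
      rw [← hUreg]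
    obtain ⟨b, hbcount, hbne, hbasis⟩ := TopologicalSpace.exists_countable_basis X
    set I := {B ∈ b | (B ∩ U).Nonempty} with hI
    set D : Set X → Set X := fun B => Reach g S (B ∩ U) ∪ (closure U)ᶜ with hD
    have hDopen : ∀ B ∈ I, IsOpen (D B) := fun B hB =>
      (isOpen_reach15 hreg1 ((hbasis.isOpen hB.1).inter hUopen)).union
        isClosed_closure.isOpen_compl
    have hDdense : ∀ B ∈ I, Dense (D B) := by
      intro B hB
      intro z
      rw [mem_closure_iff]
      intro o ho hzo
      by_cases hz : (o ∩ U).Nonempty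
      · obtain ⟨u, huo, huU⟩ := hz
        have hucl : u ∈ closure (Reach g S (B ∩ U)) :=
          interior_subset (h2 (B ∩ U) ((hbasis.isOpen hB.1).inter hUopen) hB.2
            inter_subset_right huU)
        rw [mem_closure_iff] at hucl
        obtain ⟨w, hw1, hw2⟩ := hucl o ho huo
        exact ⟨w, hw1, Or.inl hw2⟩
      · have hzU : z ∉ closure U := by
          intro h
          rw [mem_closure_iff] at h
          exact hz (h o ho hzo)
        exact ⟨z, hzo, Or.inr hzU⟩
    have hdense : Dense (⋂ B ∈ I, D B) :=
      dense_biInter_of_isOpen hDopen (hbcount.mono (sep_subset _ _)) hDdense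
    have hkey : ∀ x ∈ U, x ∈ ⋂ B ∈ I, D B →
        x ∈ {x ∈ U | U = interior (closure (modHull g S {x}))} := by
      intro x hxU hxD
      refine ⟨hxU, ?_⟩
      have horbU : modHull g S {x} ⊆ U :=
        sInter_subset_of_mem ⟨hUinv, singleton_subset_iff.mpr hxU⟩
      have hUcl : U ⊆ closure (modHull g S {x}) := by
        intro z hzU
        rw [mem_closure_iff]
        intro o ho hzo
        obtain ⟨B, hBb, hzB, hBsub⟩ :=
          hbasis.exists_subset_of_mem_open (mem_inter hzo hzU) (ho.inter hUopen)
        have hBI : B ∈ I := ⟨hBb, ⟨z, hzB, (hBsub hzB).2⟩⟩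
        have hxDB : x ∈ D B := by
          have := mem_iInter₂.mp hxD B hBI
          exact this
        have hxR : x ∈ Reach g S (B ∩ U) := by
          rcases hxDB with h | h
          · exact h
          · exact absurd (subset_closure hxU) h
        obtain ⟨n, hpath, hmem⟩ := hxR
        have hgn : g^[n] x ∈ modHull g S {x} :=
          modInv_iterate15 (modInv_modHull15 g S {x})
            (subset_modHull15 g S {x} rfl) hpath
        exact ⟨g^[n] x, (hBsub hmem.1).1, hgn⟩
      refine subset_antisymm (interior_maximal hUcl hUopen) ?_
      refine subset_trans (interior_mono (closure_mono horbU)) ?_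
      rw [← hUreg]
    have hUclS : U ⊆ closure {x ∈ U | U = interior (closure (modHull g S {x}))} := by
      intro z hzU
      rw [mem_closure_iff]
      intro o ho hzo
      obtain ⟨x, hxoU, hxD⟩ :=
        hdense.inter_open_nonempty (o ∩ U) (ho.inter hUopen) ⟨z, hzo, hzU⟩
      exact ⟨x, hxoU.1, hkey x hxoU.2 hxD⟩
    exact subset_antisymm (interior_maximal hUclS hUopen) hsub1
  -- (3) → (4)
  have h34 : U = interior (closure {x ∈ U | U = interior (closure (modHull g S {x}))}) →
      ∃ x ∈ U, U = interior (closure (modHull g S {x})) := by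
    intro h3
    have hne : {x ∈ U | U = interior (closure (modHull g S {x}))}.Nonempty := by
      by_contra h
      rw [not_nonempty_iff_eq_empty] at h
      rw [h] at h3
      simp only [closure_empty, interior_empty] at h3
      exact hUne.ne_empty h3
    obtain ⟨x, hxU, hx⟩ := hne
    exact ⟨x, hxU, hx⟩
  -- (4) → (1)
  have h41 : (∃ x ∈ U, U = interior (closure (modHull g S {x}))) → TransElem g S U := by
    rintro ⟨x, hxU, hx⟩
    refine ⟨⟨hUne, hUreg, hUinv⟩, fun V hV hVU => ?_⟩
    obtain ⟨hVne, hVreg, hVinv⟩ := hV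
    have hVopen : IsOpen V := by rw [hVreg]; exact isOpen_interior
    obtain ⟨v, hvV⟩ := hVne
    have hvcl : v ∈ closure (modHull g S {x}) := by
      have : v ∈ U := hVU hvV
      rw [hx] at this
      exact interior_subset this
    rw [mem_closure_iff] at hvcl
    obtain ⟨w, hwV, hwM⟩ := hvcl V hVopen hvV
    obtain ⟨n, hpath, rfl⟩ := modHull_singleton_subset15 g S x hwM
    have horb : modHull g S {x} ⊆ ((fun k => g^[k] x) '' (Set.Iio n)) ∪ closure V := by
      intro y hy
      obtain ⟨m, hpm, rfl⟩ := modHull_singleton_subset15 g S x hy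
      by_cases hmn : m < n
      · exact Or.inl ⟨m, hmn, rfl⟩
      · right
        push_neg at hmn
        have heq : g^[m] x = g^[m - n] (g^[n] x) := by
          rw [← Function.iterate_add_apply]
          congr 1
          omega
        rw [heq]
        refine subset_closure (modInv_iterate15 hVinv hwV ?_)
        intro k hk
        have hiter : g^[k] (g^[n] x) = g^[k + n] x :=
          (Function.iterate_add_apply g k n x).symm
        rw [hiter]
        exact hpm (k + n) (by omega)
    have hFfin : ((fun k => g^[k] x) '' (Set.Iio n)).Finite :=
      (Set.finite_Iio n).image _
    have hclorb : closure (modHull g S {x}) ⊆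
        ((fun k => g^[k] x) '' (Set.Iio n)) ∪ closure V :=
      closure_minimal horb (hFfin.isClosed.union isClosed_closure)
    have hUclV : U ⊆ closure V := by
      rw [hx]
      exact subset_trans (interior_mono hclorb)
        (interior_finite_union_subset_closure15 hFfin)
    have hUV : U ⊆ V := by rw [hVreg]; exact interior_maximal hUclV hUopen
    exact subset_antisymm hVU hUV
  exact ⟨⟨h12, h21⟩, ⟨h23, fun h3 => h12 (h41 (h34 h3))⟩,
    ⟨h34, fun h4 => h23 (h12 (h41 h4))⟩⟩
end

section
/- If C ⊆ S and U is a mod-f-invariant open set with U ∩ int(cl([C])) ≠ ∅, then U ∩ C ≠ ∅. In particular, if int(cl([C])) ≠ ∅ then int(cl([C])) contains an element of C. -/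
open Set Topology Function

variable {X : Type*}

variable [TopologicalSpace X]

theorem stmt17 {X : Type*} [MetricSpace X] [CompleteSpace X]
    [TopologicalSpace.SeparableSpace X] [∀ x : X, (𝓝[≠] x).NeBot]
    (g : X → X) (S : Set X) (hScl : IsClosed S) (hSnd : IsNowhereDense S)
    (hreg1 : ∀ O : Set X, IsOpen O → IsOpen (g ⁻¹' O \ S))
    (hreg2 : ∀ O : Set X, IsOpen O → IsOpen (g '' (O \ S))) (C : Set X) (hC : C ⊆ S) :
    (∀ U : Set X, ModInv g S U → IsOpen U →
        (U ∩ interior (closure (fullHull g S C))).Nonempty → (U ∩ C).Nonempty) ∧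
    ((interior (closure (fullHull g S C))).Nonempty →
        (interior (closure (fullHull g S C)) ∩ C).Nonempty) := by
  have hHfull : FullInv g S (fullHull g S C) := by
    constructor
    · rintro y ⟨x, ⟨hx1, hx2⟩, rfl⟩
      rw [fullHull, mem_sInter] at hx1 ⊢
      intro B hB
      exact hB.1.1 ⟨x, ⟨hx1 B hB, hx2⟩, rfl⟩
    · rintro y ⟨x, ⟨hx1, hx2⟩, rfl⟩
      rw [mem_compl_iff, fullHull, mem_sInter] at hx1
      push_neg at hx1
      obtain ⟨B, hB, hxB⟩ := hx1
      intro hgx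
      rw [fullHull, mem_sInter] at hgx
      exact hB.1.2 ⟨x, ⟨hxB, hx2⟩, rfl⟩ (hgx B hB)
  have hCH : C ⊆ fullHull g S C := fun x hx => mem_sInter.mpr fun B hB => hB.2 hx
  have main : ∀ U : Set X, ModInv g S U → IsOpen U →
      (U ∩ interior (closure (fullHull g S C))).Nonempty → (U ∩ C).Nonempty := by
    intro U hUinv hUopen hmeet
    by_contra hUC
    rw [not_nonempty_iff_eq_empty] at hUC
    have hRinv : ModInv g S (Reach g S U) := by
      rintro y ⟨x, ⟨⟨n, hn1, hn2⟩, hxS⟩, rfl⟩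
      cases n with
      | zero => exact ⟨0, by simp, hUinv ⟨x, ⟨hn2, hxS⟩, rfl⟩⟩
      | succ n =>
        refine ⟨n, fun k hk => ?_, ?_⟩
        · have := hn1 (k+1) (by omega)
          simpa [Function.iterate_succ_apply] using this
        · simpa [Function.iterate_succ_apply] using hn2
    have hD : FullInv g S (fullHull g S C \ Reach g S U) := by
      constructor
      · rintro y ⟨x, ⟨⟨hxH, hxR⟩, hxS⟩, rfl⟩
        refine ⟨hHfull.1 ⟨x, ⟨hxH, hxS⟩, rfl⟩, ?_⟩
        rintro ⟨n, hn1, hn2⟩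
        refine hxR ⟨n + 1, fun k hk => ?_, ?_⟩
        · cases k with
          | zero => exact hxS
          | succ k =>
            have := hn1 k (by omega)
            simpa [Function.iterate_succ_apply] using this
        · simpa [Function.iterate_succ_apply] using hn2
      · rintro y ⟨x, ⟨hx1, hx2⟩, rfl⟩
        rw [mem_compl_iff, mem_diff, not_and, not_not] at hx1
        rw [mem_compl_iff, mem_diff, not_and, not_not]
        intro hgxH
        by_cases hxH : x ∈ fullHull g S C
        · exact hRinv ⟨x, ⟨hx1 hxH, hx2⟩, rfl⟩
        · exact absurd hgxH (hHfull.2 ⟨x, ⟨hxH, hx2⟩, rfl⟩)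
    have hCD : C ⊆ fullHull g S C \ Reach g S U := by
      intro x hx
      refine ⟨hCH hx, ?_⟩
      rintro ⟨n, hn1, hn2⟩
      cases n with
      | zero => exact absurd (show x ∈ U ∩ C from ⟨hn2, hx⟩) (by simp [hUC])
      | succ n => exact hn1 0 (Nat.succ_pos n) (hC hx)
    have hsub : fullHull g S C ⊆ fullHull g S C \ Reach g S U :=
      sInter_subset_of_mem ⟨hD, hCD⟩
    have hdisj : U ∩ fullHull g S C = ∅ := by
      ext x
      simp only [mem_inter_iff, mem_empty_iff_false, iff_false, not_and]
      intro hxU hxH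
      exact (hsub hxH).2 ⟨0, by simp, hxU⟩
    obtain ⟨x, hxU, hxI⟩ := hmeet
    have : x ∈ closure (U ∩ fullHull g S C) :=
      hUopen.inter_closure ⟨hxU, interior_subset hxI⟩
    rw [hdisj, closure_empty] at this
    exact this
  refine ⟨main, fun hne => ?_⟩
  have hOinv : ModInv g S (interior (closure (fullHull g S C))) := by
    have hopen : IsOpen (g '' (interior (closure (fullHull g S C)) \ S)) :=
      hreg2 _ isOpen_interior
    have hsub : g '' (interior (closure (fullHull g S C)) \ S) ⊆
        closure (fullHull g S C) := by
      rintro z ⟨w, ⟨hwO, hwS⟩, rfl⟩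
      rw [mem_closure_iff]
      intro V hV hgwV
      have hwcl : w ∈ closure (fullHull g S C) := interior_subset hwO
      rw [mem_closure_iff] at hwcl
      obtain ⟨y, hyO, hyH⟩ := hwcl _ (hreg1 V hV) ⟨hgwV, hwS⟩
      exact ⟨g y, hyO.1, hHfull.1 ⟨y, ⟨hyH, hyO.2⟩, rfl⟩⟩
    exact fun z hz => interior_maximal hsub hopen hz
  obtain ⟨x, hx⟩ := hne
  exact main _ hOinv isOpen_interior ⟨x, hx, hx⟩
end
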